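/- arXiv:2603.07000 — 6 statements merged into one kernel-verified Lean document; each statement's English description precedes it below -/
import Mathlib

section
/- Let U be a 3-cuttable unrooted binary phylogenetic network on X, let e be a non-cut-edge of U, and let U' be the graph obtained from U by eliminating e. Then U' is a 3-cuttable unrooted binary phylogenetic network on X. -/
/-- A graph with an explicit vertex set inside an ambient type `V`. -/
structure Net (V : Type) where
  verts : Set V
  graph : SimpleGraph V
  support : ∀ ⦃a b : V⦄, graph.Adj a b → a ∈ verts ∧ b ∈ verts

namespace Net

variable {V : Type}

/-- The degree of a vertex. -/
noncomputable def deg (N : Net V) (v : V) : ℕ := (N.graph.neighborSet v).ncard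

/-- `N` is connected (as a graph on its vertex set `N.verts`). -/
def ConnectedOn (N : Net V) : Prop :=
  N.verts.Nonempty ∧ ∀ a ∈ N.verts, ∀ b ∈ N.verts, N.graph.Reachable a b

/-- The set of leaves (degree-1 vertices). -/
def leaves (N : Net V) : Set V := {v | v ∈ N.verts ∧ N.deg v = 1}

/-- `N` is an unrooted binary phylogenetic network on the (label) set `X`:
it is simple (automatic for `SimpleGraph`), connected, every vertex has degree 1 or 3,
and the degree-1 vertices are exactly the elements of `X` (we identify each leaf with
its label). -/
def IsUBPN (N : Net V) (X : Set V) : Prop :=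
  N.ConnectedOn ∧ (∀ v ∈ N.verts, N.deg v = 1 ∨ N.deg v = 3) ∧ N.leaves = X

/-- Deleting a set of edges. -/
def deleteEdges (N : Net V) (D : Set (Sym2 V)) : Net V where
  verts := N.verts
  graph := N.graph.deleteEdges D
  support := fun _ _ h => N.support ((SimpleGraph.deleteEdges_adj.mp h).1)

/-- A cut-edge: an edge whose deletion disconnects the network. -/
def IsCutEdge (N : Net V) (e : Sym2 V) : Prop :=
  e ∈ N.graph.edgeSet ∧ ¬ (N.deleteEdges {e}).ConnectedOn

/-- `N` is `q`-cuttable: every cycle contains a path of at least `q` vertices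
each of which is incident to a cut-edge. -/
def QCuttable (N : Net V) (q : ℕ) : Prop :=
  ∀ ⦃r : V⦄ (C : N.graph.Walk r r), C.IsCycle →
    ∃ (x y : V) (P : N.graph.Walk x y), P.IsPath ∧ q ≤ P.support.length ∧
      (∀ v ∈ P.support, v ∈ C.support) ∧ (∀ e ∈ P.edges, e ∈ C.edges) ∧
      ∀ v ∈ P.support, ∃ e, N.IsCutEdge e ∧ v ∈ e

end Net

set_option linter.unusedSectionVars false
set_option linter.unusedVariables false
set_option maxHeartbeats 0

open SimpleGraph


section Reach
variable {V : Type}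

lemma reach_delete_detour {G : SimpleGraph V} {x y : V}
    (h : (G.deleteEdges {s(x, y)}).Reachable x y) :
    ∀ {a b : V}, G.Reachable a b → (G.deleteEdges {s(x, y)}).Reachable a b := by
  intro a b hab
  obtain ⟨W⟩ := hab
  induction W with
  | nil => exact Reachable.refl _
  | @cons a m b hadj p ih =>
    refine Reachable.trans ?_ ih
    by_cases hc : s(a, m) = s(x, y)
    · rcases Sym2.eq_iff.mp hc with ⟨rfl, rfl⟩ | ⟨rfl, rfl⟩
      · exact h
      · exact h.symm
    · exact (SimpleGraph.deleteEdges_adj.mpr ⟨hadj, by simpa using hc⟩).reachable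

lemma reach_up {G H : SimpleGraph V} {u₁ u₂ v₁ v₂ : V}
    (hold : ∀ a b, H.Adj a b → s(a, b) ≠ s(u₁, u₂) → s(a, b) ≠ s(v₁, v₂) → G.Reachable a b)
    (h1 : H.Adj u₁ u₂ → G.Reachable u₁ u₂) (h2 : H.Adj v₁ v₂ → G.Reachable v₁ v₂)
    {a b : V} (h : H.Reachable a b) : G.Reachable a b := by
  obtain ⟨W⟩ := h
  induction W with
  | nil => exact Reachable.refl _
  | @cons a m b hadj p ih =>
    refine Reachable.trans ?_ ih
    by_cases hc : s(a, m) = s(u₁, u₂)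
    · rcases Sym2.eq_iff.mp hc with ⟨rfl, rfl⟩ | ⟨rfl, rfl⟩
      · exact h1 hadj
      · exact (h1 hadj.symm).symm
    · by_cases hd : s(a, m) = s(v₁, v₂)
      · rcases Sym2.eq_iff.mp hd with ⟨rfl, rfl⟩ | ⟨rfl, rfl⟩
        · exact h2 hadj
        · exact (h2 hadj.symm).symm
      · exact hold a m hadj hc hd

lemma reach_down {G H : SimpleGraph V} {u v u₁ u₂ v₁ v₂ : V}
    (hu' : ∀ b, G.Adj u b → b = u₁ ∨ b = u₂) (hv' : ∀ b, G.Adj v b → b = v₁ ∨ b = v₂)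
    (hold : ∀ a b, G.Adj a b → a ≠ u → a ≠ v → b ≠ u → b ≠ v → H.Reachable a b)
    (h12 : H.Reachable u₁ u₂) (h34 : H.Reachable v₁ v₂)
    (hu₁u : u₁ ≠ u) (hu₁v : u₁ ≠ v) (hu₂u : u₂ ≠ u) (hu₂v : u₂ ≠ v)
    (hv₁u : v₁ ≠ u) (hv₁v : v₁ ≠ v) (hv₂u : v₂ ≠ u) (hv₂v : v₂ ≠ v) :
    ∀ {a b : V} (W : G.Walk a b), a ≠ u → a ≠ v → b ≠ u → b ≠ v → H.Reachable a b := by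
  suffices key : ∀ (n : ℕ) {a b : V} (W : G.Walk a b), W.length ≤ n →
      a ≠ u → a ≠ v → b ≠ u → b ≠ v → H.Reachable a b by
    intro a b W; exact key W.length W le_rfl
  intro n
  induction n with
  | zero =>
    intro a b W hW hau hav _ _
    have : a = b := W.eq_of_length_eq_zero (Nat.le_zero.mp hW)
    exact this ▸ Reachable.refl _
  | succ n ih =>
    intro a b W hW hau hav hbu hbv
    cases W with
    | nil => exact Reachable.refl _
    | @cons _ m _ hadj p =>
      by_cases hmu : m = u
      · have ha12 : a = u₁ ∨ a = u₂ := hu' a (hmu ▸ hadj.symm)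
        cases p with
        | nil => exact absurd hmu hbu
        | @cons _ d _ hadj2 q =>
          have hd12 : d = u₁ ∨ d = u₂ := hu' d (hmu ▸ hadj2)
          have hreach : H.Reachable a d := by
            rcases ha12 with rfl | rfl <;> rcases hd12 with rfl | rfl
            · exact Reachable.refl _
            · exact h12
            · exact h12.symm
            · exact Reachable.refl _
          have hq : q.length ≤ n := by
            simp only [Walk.length_cons] at hW; omega
          have hdu : d ≠ u := by rcases hd12 with rfl | rfl <;> assumption
          have hdv : d ≠ v := by rcases hd12 with rfl | rfl <;> assumption
          exact hreach.trans (ih q hq hdu hdv hbu hbv)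
      · by_cases hmv : m = v
        · have ha12 : a = v₁ ∨ a = v₂ := hv' a (hmv ▸ hadj.symm)
          cases p with
          | nil => exact absurd hmv hbv
          | @cons _ d _ hadj2 q =>
            have hd12 : d = v₁ ∨ d = v₂ := hv' d (hmv ▸ hadj2)
            have hreach : H.Reachable a d := by
              rcases ha12 with rfl | rfl <;> rcases hd12 with rfl | rfl
              · exact Reachable.refl _
              · exact h34
              · exact h34.symm
              · exact Reachable.refl _
            have hq : q.length ≤ n := by
              simp only [Walk.length_cons] at hW; omega
            have hdu : d ≠ u := by rcases hd12 with rfl | rfl <;> assumption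
            have hdv : d ≠ v := by rcases hd12 with rfl | rfl <;> assumption
            exact hreach.trans (ih q hq hdu hdv hbu hbv)
        · have hp : p.length ≤ n := by
            simp only [Walk.length_cons] at hW; omega
          exact (hold a m hadj hau hav hmu hmv).trans (ih p hp hmu hmv hbu hbv)

lemma supp_mem_aux {G : SimpleGraph V} :
    ∀ {a b : V} (W : G.Walk a b) (x : V), x ∈ W.support → x = b ∨ ∃ y, G.Adj x y := by
  intro a b W
  induction W with
  | nil => intro x hx; left; simpa using hx
  | @cons a m b hadj p ih =>
    intro x hx
    rcases List.mem_cons.mp (by simpa using hx) with rfl | hx'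
    · exact Or.inr ⟨m, hadj⟩
    · exact ih x hx'

end Reach


section Lift
variable {V : Type} [DecidableEq V] {G H : SimpleGraph V} {u v u₁ u₂ v₁ v₂ : V}

lemma adjL (ha1 : G.Adj u u₁) (ha2 : G.Adj u u₂) {a m : V} (hc : s(a, m) = s(u₁, u₂)) :
    G.Adj a u ∧ G.Adj u m := by
  rcases Sym2.eq_iff.mp hc with ⟨rfl, rfl⟩ | ⟨rfl, rfl⟩
  · exact ⟨ha1.symm, ha2⟩
  · exact ⟨ha2.symm, ha1⟩

noncomputable def liftWalk (ha1 : G.Adj u u₁) (ha2 : G.Adj u u₂) (ha3 : G.Adj v v₁)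
    (ha4 : G.Adj v v₂)
    (hstep : ∀ a b : V, H.Adj a b → s(a, b) ≠ s(u₁, u₂) → s(a, b) ≠ s(v₁, v₂) → G.Adj a b) :
    ∀ {a b : V}, H.Walk a b → G.Walk a b
  | _, _, SimpleGraph.Walk.nil => SimpleGraph.Walk.nil
  | a, b, @SimpleGraph.Walk.cons _ _ _ m _ h W =>
    if hc : s(a, m) = s(u₁, u₂) then
      SimpleGraph.Walk.cons (adjL ha1 ha2 hc).1 (SimpleGraph.Walk.cons (adjL ha1 ha2 hc).2
        (liftWalk ha1 ha2 ha3 ha4 hstep W))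
    else if hd : s(a, m) = s(v₁, v₂) then
      SimpleGraph.Walk.cons (adjL ha3 ha4 hd).1 (SimpleGraph.Walk.cons (adjL ha3 ha4 hd).2
        (liftWalk ha1 ha2 ha3 ha4 hstep W))
    else SimpleGraph.Walk.cons (hstep a m h hc hd) (liftWalk ha1 ha2 ha3 ha4 hstep W)

variable (ha1 : G.Adj u u₁) (ha2 : G.Adj u u₂) (ha3 : G.Adj v v₁) (ha4 : G.Adj v v₂)
    (hstep : ∀ a b : V, H.Adj a b → s(a, b) ≠ s(u₁, u₂) → s(a, b) ≠ s(v₁, v₂) → G.Adj a b)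

lemma liftWalk_not_mem_support {x : V} :
    ∀ {a b : V} (W : H.Walk a b), x ∉ W.support →
      (x = u → s(u₁, u₂) ∉ W.edges) → (x = v → s(v₁, v₂) ∉ W.edges) →
      x ∉ (liftWalk ha1 ha2 ha3 ha4 hstep W).support := by
  intro a b W
  induction W with
  | nil =>
    intro hx _ _
    simp only [liftWalk]; simpa using hx
  | @cons a m b h p ih =>
    intro hx hxu hxv
    simp only [Walk.support_cons, List.mem_cons, not_or] at hx
    simp only [liftWalk]
    split_ifs with hc hd
    · simp only [Walk.support_cons, List.mem_cons, not_or]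
      refine ⟨hx.1, ?_, ?_⟩
      · rintro rfl
        exact hxu rfl (by simp [← hc])
      · exact ih hx.2 (fun hh => fun hm => hxu hh (List.mem_cons_of_mem _ hm))
          (fun hh => fun hm => hxv hh (List.mem_cons_of_mem _ hm))
    · simp only [Walk.support_cons, List.mem_cons, not_or]
      refine ⟨hx.1, ?_, ?_⟩
      · rintro rfl
        exact hxv rfl (by simp [← hd])
      · exact ih hx.2 (fun hh => fun hm => hxu hh (List.mem_cons_of_mem _ hm))
          (fun hh => fun hm => hxv hh (List.mem_cons_of_mem _ hm))
    · simp only [Walk.support_cons, List.mem_cons, not_or]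
      exact ⟨hx.1, ih hx.2 (fun hh => fun hm => hxu hh (List.mem_cons_of_mem _ hm))
          (fun hh => fun hm => hxv hh (List.mem_cons_of_mem _ hm))⟩

lemma liftWalk_mem_support {x : V} :
    ∀ {a b : V} (W : H.Walk a b), x ∈ (liftWalk ha1 ha2 ha3 ha4 hstep W).support →
      x ∈ W.support ∨ x = u ∨ x = v := by
  intro a b W
  induction W with
  | nil =>
    intro hx
    simp only [liftWalk] at hx
    left; simpa using hx
  | @cons a m b h p ih =>
    intro hx
    simp only [liftWalk] at hx
    split_ifs at hx with hc hd
    · simp only [Walk.support_cons, List.mem_cons] at hx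
      rcases hx with rfl | rfl | hx
      · exact Or.inl (by simp)
      · exact Or.inr (Or.inl rfl)
      · rcases ih hx with h' | h' | h'
        · exact Or.inl (by simp [h'])
        · exact Or.inr (Or.inl h')
        · exact Or.inr (Or.inr h')
    · simp only [Walk.support_cons, List.mem_cons] at hx
      rcases hx with rfl | rfl | hx
      · exact Or.inl (by simp)
      · exact Or.inr (Or.inr rfl)
      · rcases ih hx with h' | h' | h'
        · exact Or.inl (by simp [h'])
        · exact Or.inr (Or.inl h')
        · exact Or.inr (Or.inr h')
    · simp only [Walk.support_cons, List.mem_cons] at hx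
      rcases hx with rfl | hx
      · exact Or.inl (by simp)
      · rcases ih hx with h' | h' | h'
        · exact Or.inl (by simp [h'])
        · exact Or.inr (Or.inl h')
        · exact Or.inr (Or.inr h')

lemma liftWalk_mem_edges {e : Sym2 V} :
    ∀ {a b : V} (W : H.Walk a b), e ∈ (liftWalk ha1 ha2 ha3 ha4 hstep W).edges →
      e ∈ W.edges ∨ ((e = s(u, u₁) ∨ e = s(u, u₂)) ∧ s(u₁, u₂) ∈ W.edges) ∨
        ((e = s(v, v₁) ∨ e = s(v, v₂)) ∧ s(v₁, v₂) ∈ W.edges) := by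
  intro a b W
  induction W with
  | nil =>
    intro hx
    simp only [liftWalk] at hx
    simp at hx
  | @cons a m b h p ih =>
    intro hx
    simp only [liftWalk] at hx
    split_ifs at hx with hc hd
    · simp only [Walk.edges_cons, List.mem_cons] at hx
      have hmem : s(u₁, u₂) ∈ (SimpleGraph.Walk.cons h p).edges := by simp [← hc]
      rcases hx with rfl | rfl | hx
      · refine Or.inr (Or.inl ⟨?_, hmem⟩)
        rcases Sym2.eq_iff.mp hc with ⟨rfl, rfl⟩ | ⟨rfl, rfl⟩
        · exact Or.inl (Sym2.eq_swap)
        · exact Or.inr (Sym2.eq_swap)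
      · refine Or.inr (Or.inl ⟨?_, hmem⟩)
        rcases Sym2.eq_iff.mp hc with ⟨rfl, rfl⟩ | ⟨rfl, rfl⟩
        · exact Or.inr rfl
        · exact Or.inl rfl
      · rcases ih hx with h' | ⟨h1, h2⟩ | ⟨h1, h2⟩
        · exact Or.inl (List.mem_cons_of_mem _ h')
        · exact Or.inr (Or.inl ⟨h1, List.mem_cons_of_mem _ h2⟩)
        · exact Or.inr (Or.inr ⟨h1, List.mem_cons_of_mem _ h2⟩)
    · simp only [Walk.edges_cons, List.mem_cons] at hx
      have hmem : s(v₁, v₂) ∈ (SimpleGraph.Walk.cons h p).edges := by simp [← hd]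
      rcases hx with rfl | rfl | hx
      · refine Or.inr (Or.inr ⟨?_, hmem⟩)
        rcases Sym2.eq_iff.mp hd with ⟨rfl, rfl⟩ | ⟨rfl, rfl⟩
        · exact Or.inl (Sym2.eq_swap)
        · exact Or.inr (Sym2.eq_swap)
      · refine Or.inr (Or.inr ⟨?_, hmem⟩)
        rcases Sym2.eq_iff.mp hd with ⟨rfl, rfl⟩ | ⟨rfl, rfl⟩
        · exact Or.inr rfl
        · exact Or.inl rfl
      · rcases ih hx with h' | ⟨h1, h2⟩ | ⟨h1, h2⟩
        · exact Or.inl (List.mem_cons_of_mem _ h')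
        · exact Or.inr (Or.inl ⟨h1, List.mem_cons_of_mem _ h2⟩)
        · exact Or.inr (Or.inr ⟨h1, List.mem_cons_of_mem _ h2⟩)
    · simp only [Walk.edges_cons, List.mem_cons] at hx
      rcases hx with rfl | hx
      · exact Or.inl (by simp)
      · rcases ih hx with h' | ⟨h1, h2⟩ | ⟨h1, h2⟩
        · exact Or.inl (List.mem_cons_of_mem _ h')
        · exact Or.inr (Or.inl ⟨h1, List.mem_cons_of_mem _ h2⟩)
        · exact Or.inr (Or.inr ⟨h1, List.mem_cons_of_mem _ h2⟩)

lemma liftWalk_edges_nodup (huv : u ≠ v) (h12 : u₁ ≠ u₂) (h34 : v₁ ≠ v₂)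
    (hu₁v : u₁ ≠ v) (hu₂v : u₂ ≠ v) (hv₁u : v₁ ≠ u) (hv₂u : v₂ ≠ u) :
    ∀ {a b : V} (W : H.Walk a b), W.edges.Nodup → (∀ e ∈ W.edges, u ∉ e ∧ v ∉ e) →
      (liftWalk ha1 ha2 ha3 ha4 hstep W).edges.Nodup := by
  intro a b W
  induction W with
  | nil => intro _ _; simp only [liftWalk]; simp
  | @cons a m b h p ih =>
    intro hnd hedge
    simp only [Walk.edges_cons, List.nodup_cons] at hnd
    have hedge' : ∀ e ∈ p.edges, u ∉ e ∧ v ∉ e :=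
      fun e he => hedge e (List.mem_cons_of_mem _ he)
    simp only [liftWalk]
    split_ifs with hc hd
    · have ham : a ≠ m := by
        rcases Sym2.eq_iff.mp hc with ⟨rfl, rfl⟩ | ⟨rfl, rfl⟩
        · exact h12
        · exact h12.symm
      have hnin : s(u₁, u₂) ∉ p.edges := hc ▸ hnd.1
      have hkey : ∀ e : Sym2 V, u ∈ e → e ∉ (liftWalk ha1 ha2 ha3 ha4 hstep p).edges := by
        intro e hue hmem
        rcases liftWalk_mem_edges ha1 ha2 ha3 ha4 hstep p hmem with h' | ⟨h1, h2⟩ | ⟨h1, h2⟩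
        · exact (hedge' e h').1 hue
        · exact hnin h2
        · rcases h1 with rfl | rfl <;> rcases Sym2.mem_iff.mp hue with rfl | rfl
          · exact huv rfl
          · exact hv₁u rfl
          · exact huv rfl
          · exact hv₂u rfl
      simp only [Walk.edges_cons, List.nodup_cons, List.mem_cons, not_or]
      refine ⟨⟨?_, hkey _ (by simp)⟩, hkey _ (by simp), ih hnd.2 hedge'⟩
      intro heq
      rcases Sym2.eq_iff.mp heq with ⟨h1, h2⟩ | ⟨h1, h2⟩
      · exact ham (h1.trans h2)
      · exact ham h1
    · have ham : a ≠ m := by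
        rcases Sym2.eq_iff.mp hd with ⟨rfl, rfl⟩ | ⟨rfl, rfl⟩
        · exact h34
        · exact h34.symm
      have hnin : s(v₁, v₂) ∉ p.edges := hd ▸ hnd.1
      have hkey : ∀ e : Sym2 V, v ∈ e → e ∉ (liftWalk ha1 ha2 ha3 ha4 hstep p).edges := by
        intro e hue hmem
        rcases liftWalk_mem_edges ha1 ha2 ha3 ha4 hstep p hmem with h' | ⟨h1, h2⟩ | ⟨h1, h2⟩
        · exact (hedge' e h').2 hue
        · rcases h1 with rfl | rfl <;> rcases Sym2.mem_iff.mp hue with rfl | rfl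
          · exact huv rfl
          · exact hu₁v rfl
          · exact huv rfl
          · exact hu₂v rfl
        · exact hnin h2
      simp only [Walk.edges_cons, List.nodup_cons, List.mem_cons, not_or]
      refine ⟨⟨?_, hkey _ (by simp)⟩, hkey _ (by simp), ih hnd.2 hedge'⟩
      intro heq
      rcases Sym2.eq_iff.mp heq with ⟨h1, h2⟩ | ⟨h1, h2⟩
      · exact ham (h1.trans h2)
      · exact ham h1
    · simp only [Walk.edges_cons, List.nodup_cons]
      refine ⟨?_, ih hnd.2 hedge'⟩
      intro hmem
      rcases liftWalk_mem_edges ha1 ha2 ha3 ha4 hstep p hmem with h' | ⟨h1, h2⟩ | ⟨h1, h2⟩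
      · exact hnd.1 h'
      · have hu' : u ∈ s(a, m) := by rcases h1 with h1 | h1 <;> simp [h1]
        exact (hedge _ (by simp)).1 hu'
      · have hv' : v ∈ s(a, m) := by rcases h1 with h1 | h1 <;> simp [h1]
        exact (hedge _ (by simp)).2 hv'

lemma liftWalk_support_nodup (huv : u ≠ v) :
    ∀ {a b : V} (W : H.Walk a b), W.support.Nodup → W.edges.Nodup →
      u ∉ W.support → v ∉ W.support →
      (liftWalk ha1 ha2 ha3 ha4 hstep W).support.Nodup := by
  intro a b W
  induction W with
  | nil => intro _ _ _ _; simp only [liftWalk]; simp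
  | @cons a m b h p ih =>
    intro hsn hen hus hvs
    simp only [Walk.support_cons, List.nodup_cons] at hsn
    simp only [Walk.support_cons, List.mem_cons, not_or] at hus hvs
    simp only [Walk.edges_cons, List.nodup_cons] at hen
    have hau : a ≠ u := fun hh => hus.1 hh.symm
    have hav : a ≠ v := fun hh => hvs.1 hh.symm
    simp only [liftWalk]
    split_ifs with hc hd
    · simp only [Walk.support_cons, List.nodup_cons, List.mem_cons, not_or]
      refine ⟨⟨hau, ?_⟩, ?_, ?_⟩
      · exact liftWalk_not_mem_support ha1 ha2 ha3 ha4 hstep p hsn.1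
          (fun hh => absurd hh hau) (fun hh => absurd hh hav)
      · exact liftWalk_not_mem_support ha1 ha2 ha3 ha4 hstep p hus.2
          (fun _ => hc ▸ hen.1) (fun hh => absurd hh huv)
      · exact ih hsn.2 hen.2 hus.2 hvs.2
    · simp only [Walk.support_cons, List.nodup_cons, List.mem_cons, not_or]
      refine ⟨⟨hav, ?_⟩, ?_, ?_⟩
      · exact liftWalk_not_mem_support ha1 ha2 ha3 ha4 hstep p hsn.1
          (fun hh => absurd hh hau) (fun hh => absurd hh hav)
      · exact liftWalk_not_mem_support ha1 ha2 ha3 ha4 hstep p hvs.2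
          (fun hh => absurd hh (Ne.symm huv)) (fun _ => hd ▸ hen.1)
      · exact ih hsn.2 hen.2 hus.2 hvs.2
    · simp only [Walk.support_cons, List.nodup_cons]
      refine ⟨?_, ih hsn.2 hen.2 hus.2 hvs.2⟩
      exact liftWalk_not_mem_support ha1 ha2 ha3 ha4 hstep p hsn.1
        (fun hh => absurd hh hau) (fun hh => absurd hh hav)

lemma liftWalk_edges_of_u (hne : s(u₁, u₂) ≠ s(v₁, v₂)) :
    ∀ {a b : V} (W : H.Walk a b), s(u₁, u₂) ∈ W.edges →
      s(u, u₁) ∈ (liftWalk ha1 ha2 ha3 ha4 hstep W).edges ∧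
      s(u, u₂) ∈ (liftWalk ha1 ha2 ha3 ha4 hstep W).edges := by
  intro a b W
  induction W with
  | nil => intro hx; simp at hx
  | @cons a m b h p ih =>
    intro hx
    simp only [liftWalk]
    split_ifs with hc hd
    · refine ⟨?_, ?_⟩ <;> simp only [Walk.edges_cons, List.mem_cons] <;>
        rcases Sym2.eq_iff.mp hc with ⟨h1, h2⟩ | ⟨h1, h2⟩
      · exact Or.inl (by rw [h1]; exact Sym2.eq_swap)
      · exact Or.inr (Or.inl (by rw [h2]))
      · exact Or.inr (Or.inl (by rw [h2]))
      · exact Or.inl (by rw [h1]; exact Sym2.eq_swap)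
    · have hx' : s(u₁, u₂) ∈ p.edges := by
        rw [Walk.edges_cons] at hx
        rcases List.mem_cons.mp hx with hh | hh
        · exact absurd (hh.trans hd) hne
        · exact hh
      refine ⟨List.mem_cons_of_mem _ (List.mem_cons_of_mem _ (ih hx').1),
        List.mem_cons_of_mem _ (List.mem_cons_of_mem _ (ih hx').2)⟩
    · have hx' : s(u₁, u₂) ∈ p.edges := by
        rw [Walk.edges_cons] at hx
        rcases List.mem_cons.mp hx with hh | hh
        · exact absurd hh.symm hc
        · exact hh
      exact ⟨List.mem_cons_of_mem _ (ih hx').1, List.mem_cons_of_mem _ (ih hx').2⟩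

lemma liftWalk_edges_of_v (hne : s(u₁, u₂) ≠ s(v₁, v₂)) :
    ∀ {a b : V} (W : H.Walk a b), s(v₁, v₂) ∈ W.edges →
      s(v, v₁) ∈ (liftWalk ha1 ha2 ha3 ha4 hstep W).edges ∧
      s(v, v₂) ∈ (liftWalk ha1 ha2 ha3 ha4 hstep W).edges := by
  intro a b W
  induction W with
  | nil => intro hx; simp at hx
  | @cons a m b h p ih =>
    intro hx
    simp only [liftWalk]
    split_ifs with hc hd
    · have hx' : s(v₁, v₂) ∈ p.edges := by
        rw [Walk.edges_cons] at hx
        rcases List.mem_cons.mp hx with hh | hh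
        · exact absurd (hh.trans hc) (Ne.symm hne)
        · exact hh
      refine ⟨List.mem_cons_of_mem _ (List.mem_cons_of_mem _ (ih hx').1),
        List.mem_cons_of_mem _ (List.mem_cons_of_mem _ (ih hx').2)⟩
    · refine ⟨?_, ?_⟩ <;> simp only [Walk.edges_cons, List.mem_cons] <;>
        rcases Sym2.eq_iff.mp hd with ⟨h1, h2⟩ | ⟨h1, h2⟩
      · exact Or.inl (by rw [h1]; exact Sym2.eq_swap)
      · exact Or.inr (Or.inl (by rw [h2]))
      · exact Or.inr (Or.inl (by rw [h2]))
      · exact Or.inl (by rw [h1]; exact Sym2.eq_swap)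
    · have hx' : s(v₁, v₂) ∈ p.edges := by
        rw [Walk.edges_cons] at hx
        rcases List.mem_cons.mp hx with hh | hh
        · exact absurd hh.symm hd
        · exact hh
      exact ⟨List.mem_cons_of_mem _ (ih hx').1, List.mem_cons_of_mem _ (ih hx').2⟩

lemma liftWalk_isCycle (huv : u ≠ v) (h12 : u₁ ≠ u₂) (h34 : v₁ ≠ v₂)
    (hu₁v : u₁ ≠ v) (hu₂v : u₂ ≠ v) (hv₁u : v₁ ≠ u) (hv₂u : v₂ ≠ u)
    {r : V} (C : H.Walk r r) (hC : C.IsCycle)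
    (hu : u ∉ C.support) (hv : v ∉ C.support)
    (hedge : ∀ e ∈ C.edges, u ∉ e ∧ v ∉ e) :
    (liftWalk ha1 ha2 ha3 ha4 hstep C).IsCycle := by
  have hen : C.edges.Nodup := hC.edges_nodup
  have htn : C.support.tail.Nodup := hC.support_nodup
  cases C with
  | nil => exact absurd rfl hC.ne_nil
  | @cons _ m _ h p =>
    simp only [Walk.support_cons, List.tail_cons] at htn
    simp only [Walk.support_cons, List.mem_cons, not_or] at hu hv
    simp only [Walk.edges_cons, List.nodup_cons] at hen
    have hedge' : ∀ e ∈ p.edges, u ∉ e ∧ v ∉ e :=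
      fun e he => hedge e (List.mem_cons_of_mem _ he)
    have hpsn : (liftWalk ha1 ha2 ha3 ha4 hstep p).support.Nodup :=
      liftWalk_support_nodup ha1 ha2 ha3 ha4 hstep huv p htn hen.2 hu.2 hv.2
    constructor
    constructor
    · -- IsTrail
      constructor
      have := liftWalk_edges_nodup ha1 ha2 ha3 ha4 hstep huv h12 h34 hu₁v hu₂v hv₁u hv₂u
        (SimpleGraph.Walk.cons h p) (by simp only [Walk.edges_cons, List.nodup_cons]; exact hen)
        hedge
      exact this
    · -- ne nil
      simp only [liftWalk]
      split_ifs <;> simp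
    · -- support tail nodup
      simp only [liftWalk]
      split_ifs with hc hd
      · simp only [Walk.support_cons, List.tail_cons, List.nodup_cons]
        refine ⟨?_, hpsn⟩
        exact liftWalk_not_mem_support ha1 ha2 ha3 ha4 hstep p hu.2
          (fun _ => hc ▸ hen.1) (fun hh => absurd hh huv)
      · simp only [Walk.support_cons, List.tail_cons, List.nodup_cons]
        refine ⟨?_, hpsn⟩
        exact liftWalk_not_mem_support ha1 ha2 ha3 ha4 hstep p hv.2
          (fun hh => absurd hh (Ne.symm huv)) (fun _ => hd ▸ hen.1)
      · simp only [Walk.support_cons, List.tail_cons]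
        exact hpsn
end Lift
section Deg
variable {V : Type} [Fintype V] (U U' : Net V) (u v u₁ u₂ v₁ v₂ : V)

lemma length_le_two {l : List V} {a b : V} (h : ∀ x ∈ l, x = a ∨ x = b) (hn : l.Nodup) :
    l.length ≤ 2 := by
  classical
  have hsub : l.toFinset ⊆ {a, b} := by
    intro x hx
    rcases h x (List.mem_toFinset.mp hx) with rfl | rfl <;> simp
  calc l.length = l.toFinset.card := (List.toFinset_card_of_nodup hn).symm
    _ ≤ ({a, b} : Finset V).card := Finset.card_le_card hsub
    _ ≤ 2 := (Finset.card_insert_le a {b}).trans (by simp)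

lemma triangle_isCycle {G : SimpleGraph V} {a b c : V} (hab : G.Adj a b) (hbc : G.Adj b c)
    (hca : G.Adj c a) :
    (SimpleGraph.Walk.cons hab (SimpleGraph.Walk.cons hbc
      (SimpleGraph.Walk.cons hca SimpleGraph.Walk.nil))).IsCycle := by
  have h1 : a ≠ b := hab.ne
  have h2 : b ≠ c := hbc.ne
  have h3 : c ≠ a := hca.ne
  rw [SimpleGraph.Walk.isCycle_def]
  refine ⟨?_, by simp, ?_⟩
  · rw [SimpleGraph.Walk.isTrail_def]
    simp only [SimpleGraph.Walk.edges_cons, SimpleGraph.Walk.edges_nil]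
    refine List.nodup_cons.mpr ⟨?_, List.nodup_cons.mpr ⟨?_, List.nodup_singleton _⟩⟩
    · intro hm
      rcases List.mem_cons.mp hm with h | h
      · rw [Sym2.eq_iff] at h; tauto
      · have h' := List.mem_singleton.mp h
        rw [Sym2.eq_iff] at h'; tauto
    · intro hm
      have h' := List.mem_singleton.mp hm
      rw [Sym2.eq_iff] at h'; tauto
  · simp only [SimpleGraph.Walk.support_cons, SimpleGraph.Walk.support_nil, List.tail_cons,
      List.nodup_cons, List.mem_cons, List.mem_singleton, List.not_mem_nil, or_false,
      List.nodup_nil, and_true, not_or]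
    tauto

lemma deg_eq_generic (w : V)
    (hADJ : ∀ a b, U'.graph.Adj a b ↔
      ((U.graph.Adj a b ∧ (a ≠ u ∧ a ≠ v) ∧ (b ≠ u ∧ b ≠ v)) ∨
        (a = u₁ ∧ b = u₂) ∨ (a = u₂ ∧ b = u₁) ∨ (a = v₁ ∧ b = v₂) ∨ (a = v₂ ∧ b = v₁)))
    (hw1 : w ≠ u₁) (hw2 : w ≠ u₂) (hw3 : w ≠ v₁) (hw4 : w ≠ v₂)
    (hwu' : w ≠ u) (hwv' : w ≠ v)
    (hwu : ¬ U.graph.Adj w u) (hwv : ¬ U.graph.Adj w v) :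
    U'.deg w = U.deg w := by
  have hset : U'.graph.neighborSet w = U.graph.neighborSet w := by
    ext z
    simp only [SimpleGraph.mem_neighborSet, hADJ w z]
    constructor
    · rintro (⟨h, _, _⟩ | ⟨h, _⟩ | ⟨h, _⟩ | ⟨h, _⟩ | ⟨h, _⟩)
      · exact h
      · exact absurd h hw1
      · exact absurd h hw2
      · exact absurd h hw3
      · exact absurd h hw4
    · intro h
      refine Or.inl ⟨h, ⟨hwu', hwv'⟩, ?_, ?_⟩
      · rintro rfl; exact hwu h
      · rintro rfl; exact hwv h
  simp only [Net.deg, hset]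

lemma deg_eq_single
    (hADJ : ∀ a b, U'.graph.Adj a b ↔
      ((U.graph.Adj a b ∧ (a ≠ u ∧ a ≠ v) ∧ (b ≠ u ∧ b ≠ v)) ∨
        (a = u₁ ∧ b = u₂) ∨ (a = u₂ ∧ b = u₁) ∨ (a = v₁ ∧ b = v₂) ∨ (a = v₂ ∧ b = v₁)))
    (hadj_u : U.graph.Adj u₁ u) (hA : ¬ U.graph.Adj u₁ u₂) (hnv : ¬ U.graph.Adj u₁ v)
    (hu₁u : u₁ ≠ u) (hu₁v : u₁ ≠ v) (h12 : u₁ ≠ u₂) (hn1 : u₁ ≠ v₁) (hn2 : u₁ ≠ v₂) :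
    U'.deg u₁ = U.deg u₁ := by
  have hset : U'.graph.neighborSet u₁ = insert u₂ (U.graph.neighborSet u₁ \ {u}) := by
    ext z
    simp only [SimpleGraph.mem_neighborSet, hADJ u₁ z, Set.mem_insert_iff, Set.mem_diff,
      Set.mem_singleton_iff, eq_self_iff_true, true_and, and_true]
    constructor
    · rintro (⟨h, _, hz⟩ | rfl | ⟨h, _⟩ | ⟨h, _⟩ | ⟨h, _⟩)
      · exact Or.inr ⟨h, hz.1⟩
      · exact Or.inl rfl
      · exact absurd h h12
      · exact absurd h hn1
      · exact absurd h hn2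
    · rintro (rfl | ⟨h, hzu⟩)
      · exact Or.inr (Or.inl rfl)
      · refine Or.inl ⟨h, ⟨hu₁u, hu₁v⟩, hzu, ?_⟩
        rintro rfl; exact hnv h
  simp only [Net.deg, hset]
  exact Set.ncard_exchange (fun hmem => hA hmem) hadj_u

lemma deg_eq_double
    (hADJ : ∀ a b, U'.graph.Adj a b ↔
      ((U.graph.Adj a b ∧ (a ≠ u ∧ a ≠ v) ∧ (b ≠ u ∧ b ≠ v)) ∨
        (a = u₁ ∧ b = u₂) ∨ (a = u₂ ∧ b = u₁) ∨ (a = u₁ ∧ b = v₂) ∨ (a = v₂ ∧ b = u₁)))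
    (hadj_u : U.graph.Adj u₁ u) (hadj_v : U.graph.Adj u₁ v)
    (hA : ¬ U.graph.Adj u₁ u₂) (hA2 : ¬ U.graph.Adj u₁ v₂)
    (hu₁u : u₁ ≠ u) (hu₁v : u₁ ≠ v) (h12 : u₁ ≠ u₂) (hn2 : u₁ ≠ v₂)
    (h24 : u₂ ≠ v₂) (hv₂u : v₂ ≠ u) (huv : u ≠ v) :
    U'.deg u₁ = U.deg u₁ := by
  have hset : U'.graph.neighborSet u₁ =
      insert u₂ ((insert v₂ (U.graph.neighborSet u₁ \ {v})) \ {u}) := by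
    ext z
    simp only [SimpleGraph.mem_neighborSet, hADJ u₁ z, Set.mem_insert_iff, Set.mem_diff,
      Set.mem_singleton_iff, eq_self_iff_true, true_and, and_true]
    constructor
    · rintro (⟨h, _, hzu, hzv⟩ | rfl | ⟨h, _⟩ | rfl | ⟨h, _⟩)
      · exact Or.inr ⟨Or.inr ⟨h, hzv⟩, hzu⟩
      · exact Or.inl rfl
      · exact absurd h h12
      · exact Or.inr ⟨Or.inl rfl, hv₂u⟩
      · exact absurd h hn2
    · rintro (rfl | ⟨rfl | ⟨h, hzv⟩, hzu⟩)
      · exact Or.inr (Or.inl rfl)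
      · exact Or.inr (Or.inr (Or.inr (Or.inl rfl)))
      · exact Or.inl ⟨h, ⟨hu₁u, hu₁v⟩, hzu, hzv⟩
  simp only [Net.deg, hset]
  have hS : (insert v₂ (U.graph.neighborSet u₁ \ {v})).ncard =
      (U.graph.neighborSet u₁).ncard :=
    Set.ncard_exchange (fun hh => hA2 hh) hadj_v
  rw [Set.ncard_exchange ?h1 ?h2, hS]
  case h1 =>
    intro hmem
    rcases Set.mem_insert_iff.mp hmem with rfl | hh
    · exact h24 rfl
    · exact hA (Set.mem_of_mem_diff hh)
  case h2 => exact Or.inr ⟨hadj_u, huv⟩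
end Deg

lemma Net.deleteEdges_graph {V : Type} (N : Net V) (D : Set (Sym2 V)) :
    (N.deleteEdges D).graph = N.graph.deleteEdges D := rfl

lemma not_cutEdge_of_mem_cycle {V : Type} (N : Net V) (hc : N.ConnectedOn)
    {r : V} (C : N.graph.Walk r r) (hC : C.IsCycle) {e : Sym2 V} (he : e ∈ C.edges) :
    ¬ N.IsCutEdge e := by
  revert he
  induction e using Sym2.ind with
  | _ x y =>
    intro he hcut
    have hreach : (N.graph.deleteEdges {s(x, y)}).Reachable x y := by
      have := (SimpleGraph.adj_and_reachable_delete_edges_iff_exists_cycle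
        (G := N.graph) (v := x) (w := y)).mpr ⟨r, C, hC, he⟩
      exact this.2
    exact hcut.2 ⟨hc.1, fun a ha b hb => reach_delete_detour hreach (hc.2 a ha b hb)⟩

lemma mem_support_of_edge {V : Type} {G : SimpleGraph V} {a b : V} (W : G.Walk a b)
    {e : Sym2 V} (he : e ∈ W.edges) {x : V} (hx : x ∈ e) : x ∈ W.support := by
  revert he hx
  induction e using Sym2.ind with
  | _ p q =>
    intro he hx
    rcases Sym2.mem_iff.mp hx with rfl | rfl
    · exact W.fst_mem_support_of_mem_edges he
    · exact W.snd_mem_support_of_mem_edges he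

open Net


/-- Let `U` be a `3`-cuttable unrooted binary phylogenetic network on
`X` and let `e = {u, v}` be a non-cut-edge of `U`, where `u` has further neighbors
`u₁, u₂` and `v` has further neighbors `v₁, v₂`.  Let `U'` be obtained from `U` by
eliminating `e`, i.e. deleting `e` and suppressing the two resulting degree-2 vertices.
Then `U'` is a `3`-cuttable unrooted binary phylogenetic network on `X`. -/
theorem eliminate_preserves_threeCuttable {V : Type} [Fintype V]
    (U : Net V) (X : Set V) (hU : U.IsUBPN X) (h3 : U.QCuttable 3)
    (u v u₁ u₂ v₁ v₂ : V)
    (huv : U.graph.Adj u v) (hnc : ¬ U.IsCutEdge s(u, v))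
    (hu₁ : U.graph.Adj u u₁) (hu₂ : U.graph.Adj u u₂)
    (hv₁ : U.graph.Adj v v₁) (hv₂ : U.graph.Adj v v₂)
    (hu₁₂ : u₁ ≠ u₂) (hu₁v : u₁ ≠ v) (hu₂v : u₂ ≠ v)
    (hv₁₂ : v₁ ≠ v₂) (hv₁u : v₁ ≠ u) (hv₂u : v₂ ≠ u)
    (U' : Net V)
    (hU'v : U'.verts = U.verts \ {u, v})
    (hU'a : ∀ a b, U'.graph.Adj a b ↔
      ((U.graph.Adj a b ∧ a ∉ ({u, v} : Set V) ∧ b ∉ ({u, v} : Set V)) ∨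
        (a = u₁ ∧ b = u₂) ∨ (a = u₂ ∧ b = u₁) ∨
        (a = v₁ ∧ b = v₂) ∨ (a = v₂ ∧ b = v₁)))
    : U'.IsUBPN X ∧ U'.QCuttable 3 := by
  
  classical
  obtain ⟨hconn, hdeg, hleaf⟩ := hU
  have hueq : u ≠ v := huv.ne
  have huV : u ∈ U.verts := (U.support huv).1
  have hvV : v ∈ U.verts := (U.support huv).2
  have hu₁V : u₁ ∈ U.verts := (U.support hu₁).2
  have hu₂V : u₂ ∈ U.verts := (U.support hu₂).2
  have hv₁V : v₁ ∈ U.verts := (U.support hv₁).2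
  have hv₂V : v₂ ∈ U.verts := (U.support hv₂).2
  have hu₁u : u₁ ≠ u := hu₁.ne'
  have hu₂u : u₂ ≠ u := hu₂.ne'
  have hv₁v : v₁ ≠ v := hv₁.ne'
  have hv₂v : v₂ ≠ v := hv₂.ne'
  -- neighbor set of u
  have hsubNu : ({v, u₁, u₂} : Set V) ⊆ U.graph.neighborSet u := by
    intro x hx
    simp only [Set.mem_insert_iff, Set.mem_singleton_iff] at hx
    rcases hx with rfl | rfl | rfl
    exacts [huv, hu₁, hu₂]
  have hcard3u : ({v, u₁, u₂} : Set V).ncard = 3 := by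
    rw [Set.ncard_insert_of_notMem (by
      simp only [Set.mem_insert_iff, Set.mem_singleton_iff, not_or]
      exact ⟨Ne.symm hu₁v, Ne.symm hu₂v⟩),
      Set.ncard_insert_of_notMem (by simp only [Set.mem_singleton_iff]; exact hu₁₂),
      Set.ncard_singleton]
  have hdeg_u : (U.graph.neighborSet u).ncard = 3 := by
    have hle := Set.ncard_le_ncard hsubNu (Set.toFinite _)
    rw [hcard3u] at hle
    rcases hdeg u huV with h | h <;> simp only [Net.deg] at h <;> omega
  have hNu : U.graph.neighborSet u = {v, u₁, u₂} :=
    (Set.eq_of_subset_of_ncard_le hsubNu (by rw [hdeg_u, hcard3u]) (Set.toFinite _)).symm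
  have hAdjU : ∀ x, U.graph.Adj u x ↔ (x = v ∨ x = u₁ ∨ x = u₂) := by
    intro x
    rw [← SimpleGraph.mem_neighborSet, hNu]
    simp [Set.mem_insert_iff]
  -- neighbor set of v
  have hsubNv : ({u, v₁, v₂} : Set V) ⊆ U.graph.neighborSet v := by
    intro x hx
    simp only [Set.mem_insert_iff, Set.mem_singleton_iff] at hx
    rcases hx with rfl | rfl | rfl
    exacts [huv.symm, hv₁, hv₂]
  have hcard3v : ({u, v₁, v₂} : Set V).ncard = 3 := by
    rw [Set.ncard_insert_of_notMem (by
      simp only [Set.mem_insert_iff, Set.mem_singleton_iff, not_or]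
      exact ⟨Ne.symm hv₁u, Ne.symm hv₂u⟩),
      Set.ncard_insert_of_notMem (by simp only [Set.mem_singleton_iff]; exact hv₁₂),
      Set.ncard_singleton]
  have hdeg_v : (U.graph.neighborSet v).ncard = 3 := by
    have hle := Set.ncard_le_ncard hsubNv (Set.toFinite _)
    rw [hcard3v] at hle
    rcases hdeg v hvV with h | h <;> simp only [Net.deg] at h <;> omega
  have hNv : U.graph.neighborSet v = {u, v₁, v₂} :=
    (Set.eq_of_subset_of_ncard_le hsubNv (by rw [hdeg_v, hcard3v]) (Set.toFinite _)).symm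
  have hAdjV : ∀ x, U.graph.Adj v x ↔ (x = u ∨ x = v₁ ∨ x = v₂) := by
    intro x
    rw [← SimpleGraph.mem_neighborSet, hNv]
    simp [Set.mem_insert_iff]
  -- the deleted graph is connected
  have hG0conn : (U.deleteEdges {s(u, v)}).ConnectedOn := by
    by_contra h
    exact hnc ⟨(SimpleGraph.mem_edgeSet _).mpr huv, h⟩
  -- claim A : u₁ and u₂ are not adjacent
  have hA : ¬ U.graph.Adj u₁ u₂ := by
    intro had
    obtain ⟨x, y, P, hp, hlen, hsupp, _, hcut⟩ :=
      h3 (Walk.cons hu₁ (Walk.cons had (Walk.cons hu₂.symm Walk.nil)))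
        (triangle_isCycle hu₁ had hu₂.symm)
    have humem : u ∈ P.support := by
      by_contra hnu
      have hsub : ∀ z ∈ P.support, z = u₁ ∨ z = u₂ := by
        intro z hz
        have hz' := hsupp z hz
        simp only [Walk.support_cons, Walk.support_nil, List.mem_cons,
          List.mem_singleton, List.not_mem_nil, or_false] at hz'
        rcases hz' with rfl | rfl | rfl | rfl
        · exact absurd hz hnu
        · exact Or.inl rfl
        · exact Or.inr rfl
        · exact absurd hz hnu
      have := length_le_two hsub hp.support_nodup
      omega
    obtain ⟨e, hce, hue⟩ := hcut u humem
    obtain ⟨w', rfl⟩ := Sym2.mem_iff_exists.mp hue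
    have hadjw : U.graph.Adj u w' := (SimpleGraph.mem_edgeSet _).mp hce.1
    rcases (hAdjU w').mp hadjw with h' | h' | h'
    · rw [h'] at hce
      exact hnc hce
    · refine not_cutEdge_of_mem_cycle U hconn _ (triangle_isCycle hu₁ had hu₂.symm) ?_ hce
      rw [h']; simp
    · refine not_cutEdge_of_mem_cycle U hconn _ (triangle_isCycle hu₁ had hu₂.symm) ?_ hce
      rw [h', show s(u, u₂) = s(u₂, u) from Sym2.eq_swap]; simp
  -- claim A' : v₁ and v₂ are not adjacent
  have hA' : ¬ U.graph.Adj v₁ v₂ := by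
    intro had
    obtain ⟨x, y, P, hp, hlen, hsupp, _, hcut⟩ :=
      h3 (Walk.cons hv₁ (Walk.cons had (Walk.cons hv₂.symm Walk.nil)))
        (triangle_isCycle hv₁ had hv₂.symm)
    have hvmem : v ∈ P.support := by
      by_contra hnu
      have hsub : ∀ z ∈ P.support, z = v₁ ∨ z = v₂ := by
        intro z hz
        have hz' := hsupp z hz
        simp only [Walk.support_cons, Walk.support_nil, List.mem_cons,
          List.mem_singleton, List.not_mem_nil, or_false] at hz'
        rcases hz' with rfl | rfl | rfl | rfl
        · exact absurd hz hnu
        · exact Or.inl rfl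
        · exact Or.inr rfl
        · exact absurd hz hnu
      have := length_le_two hsub hp.support_nodup
      omega
    obtain ⟨e, hce, hue⟩ := hcut v hvmem
    obtain ⟨w', rfl⟩ := Sym2.mem_iff_exists.mp hue
    have hadjw : U.graph.Adj v w' := (SimpleGraph.mem_edgeSet _).mp hce.1
    rcases (hAdjV w').mp hadjw with h' | h' | h'
    · rw [h', show s(v, u) = s(u, v) from Sym2.eq_swap] at hce
      exact hnc hce
    · refine not_cutEdge_of_mem_cycle U hconn _ (triangle_isCycle hv₁ had hv₂.symm) ?_ hce
      rw [h']; simp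
    · refine not_cutEdge_of_mem_cycle U hconn _ (triangle_isCycle hv₁ had hv₂.symm) ?_ hce
      rw [h', show s(v, v₂) = s(v₂, v) from Sym2.eq_swap]; simp
  -- claim B : v is not adjacent to both u₁ and u₂
  have hB : ¬ (U.graph.Adj v u₁ ∧ U.graph.Adj v u₂) := by
    rintro ⟨hb1, hb2⟩
    obtain ⟨x, y, P, hp, hlen, hsupp, _, hcut⟩ :=
      h3 (Walk.cons huv (Walk.cons hb1 (Walk.cons hu₁.symm Walk.nil)))
        (triangle_isCycle huv hb1 hu₁.symm)
    have humem : u ∈ P.support := by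
      by_contra hnu
      have hsub : ∀ z ∈ P.support, z = v ∨ z = u₁ := by
        intro z hz
        have hz' := hsupp z hz
        simp only [Walk.support_cons, Walk.support_nil, List.mem_cons,
          List.mem_singleton, List.not_mem_nil, or_false] at hz'
        rcases hz' with rfl | rfl | rfl | rfl
        · exact absurd hz hnu
        · exact Or.inl rfl
        · exact Or.inr rfl
        · exact absurd hz hnu
      have := length_le_two hsub hp.support_nodup
      omega
    obtain ⟨e, hce, hue⟩ := hcut u humem
    obtain ⟨w', rfl⟩ := Sym2.mem_iff_exists.mp hue
    have hadjw : U.graph.Adj u w' := (SimpleGraph.mem_edgeSet _).mp hce.1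
    rcases (hAdjU w').mp hadjw with h' | h' | h'
    · rw [h'] at hce
      exact hnc hce
    · refine not_cutEdge_of_mem_cycle U hconn _ (triangle_isCycle huv hb1 hu₁.symm) ?_ hce
      rw [h', show s(u, u₁) = s(u₁, u) from Sym2.eq_swap]; simp
    · refine not_cutEdge_of_mem_cycle U hconn _ (triangle_isCycle huv hb2 hu₂.symm) ?_ hce
      rw [h', show s(u, u₂) = s(u₂, u) from Sym2.eq_swap]; simp
  have hEne : s(u₁, u₂) ≠ s(v₁, v₂) := by
    intro h
    rcases Sym2.eq_iff.mp h with ⟨h1, h2⟩ | ⟨h1, h2⟩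
    · exact hB ⟨by rw [h1]; exact hv₁, by rw [h2]; exact hv₂⟩
    · exact hB ⟨by rw [h1]; exact hv₂, by rw [h2]; exact hv₁⟩
  -- basic facts about U'
  have hu₁V' : u₁ ∈ U'.verts := by
    rw [hU'v]
    refine ⟨hu₁V, ?_⟩
    simp only [Set.mem_insert_iff, Set.mem_singleton_iff, not_or]
    exact ⟨hu₁u, hu₁v⟩
  have hu₂V' : u₂ ∈ U'.verts := by
    rw [hU'v]
    refine ⟨hu₂V, ?_⟩
    simp only [Set.mem_insert_iff, Set.mem_singleton_iff, not_or]
    exact ⟨hu₂u, hu₂v⟩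
  have hv₁V' : v₁ ∈ U'.verts := by
    rw [hU'v]
    refine ⟨hv₁V, ?_⟩
    simp only [Set.mem_insert_iff, Set.mem_singleton_iff, not_or]
    exact ⟨hv₁u, hv₁v⟩
  have hv₂V' : v₂ ∈ U'.verts := by
    rw [hU'v]
    refine ⟨hv₂V, ?_⟩
    simp only [Set.mem_insert_iff, Set.mem_singleton_iff, not_or]
    exact ⟨hv₂u, hv₂v⟩
  have hnotuv : ∀ ⦃a b : V⦄, U'.graph.Adj a b →
      (a ≠ u ∧ a ≠ v) ∧ (b ≠ u ∧ b ≠ v) := by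
    intro a b h
    have h' := U'.support h
    rw [hU'v] at h'
    have h1 := h'.1.2
    have h2 := h'.2.2
    simp only [Set.mem_insert_iff, Set.mem_singleton_iff, not_or] at h1 h2
    exact ⟨h1, h2⟩
  have hold' : ∀ a b : V, U.graph.Adj a b → a ∉ ({u, v} : Set V) → b ∉ ({u, v} : Set V) →
      U'.graph.Adj a b := fun a b h ha hb => (hU'a a b).mpr (Or.inl ⟨h, ha, hb⟩)
  have hAdj'12 : U'.graph.Adj u₁ u₂ := (hU'a _ _).mpr (Or.inr (Or.inl ⟨rfl, rfl⟩))
  have hAdj'34 : U'.graph.Adj v₁ v₂ :=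
    (hU'a _ _).mpr (Or.inr (Or.inr (Or.inr (Or.inl ⟨rfl, rfl⟩))))
  have hstep : ∀ a b : V, U'.graph.Adj a b → s(a, b) ≠ s(u₁, u₂) → s(a, b) ≠ s(v₁, v₂) →
      U.graph.Adj a b := by
    intro a b h h1 h2
    rcases (hU'a a b).mp h with ⟨h', _, _⟩ | ⟨rfl, rfl⟩ | ⟨rfl, rfl⟩ | ⟨rfl, rfl⟩ | ⟨rfl, rfl⟩
    · exact h'
    · exact absurd rfl h1
    · exact absurd Sym2.eq_swap h1
    · exact absurd rfl h2
    · exact absurd Sym2.eq_swap h2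
  have hADJ : ∀ a b : V, U'.graph.Adj a b ↔
      ((U.graph.Adj a b ∧ (a ≠ u ∧ a ≠ v) ∧ (b ≠ u ∧ b ≠ v)) ∨
        (a = u₁ ∧ b = u₂) ∨ (a = u₂ ∧ b = u₁) ∨ (a = v₁ ∧ b = v₂) ∨ (a = v₂ ∧ b = v₁)) := by
    intro a b
    rw [hU'a a b]
    simp only [Set.mem_insert_iff, Set.mem_singleton_iff, not_or]
  -- connectivity of U'
  have hmemuv : ∀ {a : V}, a ∈ U'.verts → (a ∈ U.verts ∧ a ≠ u ∧ a ≠ v) := by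
    intro a ha
    rw [hU'v] at ha
    have h2 := ha.2
    simp only [Set.mem_insert_iff, Set.mem_singleton_iff, not_or] at h2
    exact ⟨ha.1, h2⟩
  have hconn' : U'.ConnectedOn := by
    refine ⟨⟨u₁, hu₁V'⟩, ?_⟩
    intro a ha b hb
    obtain ⟨haU, hau, hav⟩ := hmemuv ha
    obtain ⟨hbU, hbu, hbv⟩ := hmemuv hb
    obtain ⟨W⟩ : (U.graph.deleteEdges {s(u, v)}).Reachable a b := hG0conn.2 a haU b hbU
    refine reach_down ?_ ?_ ?_ hAdj'12.reachable hAdj'34.reachable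
      hu₁u hu₁v hu₂u hu₂v hv₁u hv₁v hv₂u hv₂v W hau hav hbu hbv
    · intro c hc
      rw [SimpleGraph.deleteEdges_adj] at hc
      rcases (hAdjU c).mp hc.1 with rfl | rfl | rfl
      · exact absurd rfl hc.2
      · exact Or.inl rfl
      · exact Or.inr rfl
    · intro c hc
      rw [SimpleGraph.deleteEdges_adj] at hc
      rcases (hAdjV c).mp hc.1 with rfl | rfl | rfl
      · exfalso; exact hc.2 Sym2.eq_swap
      · exact Or.inl rfl
      · exact Or.inr rfl
    · intro a' b' h' ha'u ha'v hb'u hb'v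
      rw [SimpleGraph.deleteEdges_adj] at h'
      refine ((hU'a a' b').mpr (Or.inl ⟨h'.1, ?_, ?_⟩)).reachable <;>
        simp only [Set.mem_insert_iff, Set.mem_singleton_iff, not_or]
      · exact ⟨ha'u, ha'v⟩
      · exact ⟨hb'u, hb'v⟩
  -- degrees are preserved
  have hdeg' : ∀ w ∈ U'.verts, U'.deg w = U.deg w := by
    intro w hw
    obtain ⟨hwU, hwu, hwv⟩ := hmemuv hw
    by_cases hw1 : u₁ = w
    · subst hw1
      by_cases h2 : u₁ = v₁
      · subst h2
        refine deg_eq_double U U' u v u₁ u₂ v₂ hADJ hu₁.symm hv₁.symm hA hA'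
          hu₁u hu₁v hu₁₂ hv₁₂ ?_ hv₂u hueq
        intro hh
        exact hB ⟨hv₁, by rw [hh]; exact hv₂⟩
      · by_cases h3 : u₁ = v₂
        · subst h3
          refine deg_eq_double U U' u v u₁ u₂ v₁ ?_ hu₁.symm hv₂.symm hA
            (fun h => hA' h.symm) hu₁u hu₁v hu₁₂ h2 ?_ hv₁u hueq
          · exact fun a b => (hADJ a b).trans (by tauto)
          · intro hh
            exact hB ⟨hv₂, by rw [hh]; exact hv₁⟩
        · refine deg_eq_single U U' u v u₁ u₂ v₁ v₂ hADJ hu₁.symm hA ?_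
            hu₁u hu₁v hu₁₂ h2 h3
          intro h
          rcases (hAdjV u₁).mp h.symm with h' | h' | h'
          · exact hu₁u h'
          · exact h2 h'
          · exact h3 h'
    · by_cases hw2 : u₂ = w
      · subst hw2
        by_cases h2 : u₂ = v₁
        · subst h2
          refine deg_eq_double U U' u v u₂ u₁ v₂ ?_ hu₂.symm hv₁.symm
            (fun h => hA h.symm) hA' hu₂u hu₂v (Ne.symm hu₁₂) hv₁₂ ?_ hv₂u hueq
          · exact fun a b => (hADJ a b).trans (by tauto)
          · intro hh
            exact hB ⟨by rw [hh]; exact hv₂, hv₁⟩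
        · by_cases h3 : u₂ = v₂
          · subst h3
            refine deg_eq_double U U' u v u₂ u₁ v₁ ?_ hu₂.symm hv₂.symm
              (fun h => hA h.symm) (fun h => hA' h.symm) hu₂u hu₂v (Ne.symm hu₁₂)
              h2 ?_ hv₁u hueq
            · exact fun a b => (hADJ a b).trans (by tauto)
            · intro hh
              exact hB ⟨by rw [hh]; exact hv₁, hv₂⟩
          · refine deg_eq_single U U' u v u₂ u₁ v₁ v₂ ?_ hu₂.symm
              (fun h => hA h.symm) ?_ hu₂u hu₂v (Ne.symm hu₁₂) h2 h3
            · exact fun a b => (hADJ a b).trans (by tauto)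
            · intro h
              rcases (hAdjV u₂).mp h.symm with h' | h' | h'
              · exact hu₂u h'
              · exact h2 h'
              · exact h3 h'
      · by_cases hw3 : v₁ = w
        · subst hw3
          refine deg_eq_single U U' v u v₁ v₂ u₁ u₂ ?_ hv₁.symm hA' ?_
            hv₁v hv₁u hv₁₂ (fun h => hw1 h.symm) (fun h => hw2 h.symm)
          · exact fun a b => (hADJ a b).trans (by tauto)
          · intro h
            rcases (hAdjU v₁).mp h.symm with h' | h' | h'
            · exact hv₁v h'
            · exact hw1 h'.symm
            · exact hw2 h'.symm
        · by_cases hw4 : v₂ = w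
          · subst hw4
            refine deg_eq_single U U' v u v₂ v₁ u₁ u₂ ?_ hv₂.symm
              (fun h => hA' h.symm) ?_ hv₂v hv₂u (Ne.symm hv₁₂)
              (fun h => hw1 h.symm) (fun h => hw2 h.symm)
            · exact fun a b => (hADJ a b).trans (by tauto)
            · intro h
              rcases (hAdjU v₂).mp h.symm with h' | h' | h'
              · exact hv₂v h'
              · exact hw1 h'.symm
              · exact hw2 h'.symm
          · refine deg_eq_generic U U' u v u₁ u₂ v₁ v₂ w hADJ
              (fun h => hw1 h.symm) (fun h => hw2 h.symm) (fun h => hw3 h.symm)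
              (fun h => hw4 h.symm) hwu hwv ?_ ?_
            · intro h
              rcases (hAdjU w).mp h.symm with h' | h' | h'
              · exact hwv h'
              · exact hw1 h'.symm
              · exact hw2 h'.symm
            · intro h
              rcases (hAdjV w).mp h.symm with h' | h' | h'
              · exact hwu h'
              · exact hw3 h'.symm
              · exact hw4 h'.symm
  -- leaves are preserved
  have hdegu3 : U.deg u = 3 := by simp only [Net.deg]; exact hdeg_u
  have hdegv3 : U.deg v = 3 := by simp only [Net.deg]; exact hdeg_v
  have hleaves : U'.leaves = X := by
    rw [← hleaf]
    ext w
    simp only [Net.leaves, Set.mem_setOf_eq]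
    constructor
    · rintro ⟨hwV, hw1⟩
      exact ⟨(hmemuv hwV).1, by rw [← hdeg' w hwV]; exact hw1⟩
    · rintro ⟨hwV, hw1⟩
      have hwu : w ≠ u := by rintro rfl; rw [hdegu3] at hw1; omega
      have hwv : w ≠ v := by rintro rfl; rw [hdegv3] at hw1; omega
      have hwV' : w ∈ U'.verts := by
        rw [hU'v]
        refine ⟨hwV, ?_⟩
        simp only [Set.mem_insert_iff, Set.mem_singleton_iff, not_or]
        exact ⟨hwu, hwv⟩
      exact ⟨hwV', by rw [hdeg' w hwV']; exact hw1⟩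
  -- cut edge transfer lemmas
  have hcut1 : ∀ x y : V, U.IsCutEdge s(x, y) → x ∉ ({u, v} : Set V) →
      y ∉ ({u, v} : Set V) → U'.IsCutEdge s(x, y) := by
    intro x y hcut hx hy
    have hxy : U.graph.Adj x y := (SimpleGraph.mem_edgeSet _).mp hcut.1
    have hx' : x ≠ u ∧ x ≠ v := by
      simpa only [Set.mem_insert_iff, Set.mem_singleton_iff, not_or] using hx
    have hy' : y ≠ u ∧ y ≠ v := by
      simpa only [Set.mem_insert_iff, Set.mem_singleton_iff, not_or] using hy
    have hnotu : u ∉ s(x, y) := by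
      rw [Sym2.mem_iff]; push_neg; exact ⟨Ne.symm hx'.1, Ne.symm hy'.1⟩
    have hnotv : v ∉ s(x, y) := by
      rw [Sym2.mem_iff]; push_neg; exact ⟨Ne.symm hx'.2, Ne.symm hy'.2⟩
    refine ⟨(SimpleGraph.mem_edgeSet _).mpr (hold' x y hxy hx hy), ?_⟩
    intro hC'
    apply hcut.2
    refine ⟨hconn.1, ?_⟩
    have hC2 : ∀ a ∈ U'.verts, ∀ b ∈ U'.verts,
        (U'.graph.deleteEdges {s(x, y)}).Reachable a b := hC'.2
    have hedel : ∀ {z₁ z₂ : V}, u ∈ s(z₁, z₂) ∨ v ∈ s(z₁, z₂) →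
        U.graph.Adj z₁ z₂ → (U.graph.deleteEdges {s(x, y)}).Adj z₁ z₂ := by
      intro z₁ z₂ hz hadj
      refine SimpleGraph.deleteEdges_adj.mpr ⟨hadj, ?_⟩
      intro hh
      have hh' : s(z₁, z₂) = s(x, y) := hh
      rcases hz with hz | hz
      · exact hnotu (hh' ▸ hz)
      · exact hnotv (hh' ▸ hz)
    have hkey : ∀ a b, a ∈ U'.verts → b ∈ U'.verts →
        (U.graph.deleteEdges {s(x, y)}).Reachable a b := by
      intro a b ha hb
      refine reach_up (u₁ := u₁) (u₂ := u₂) (v₁ := v₁) (v₂ := v₂) ?_ ?_ ?_ (hC2 a ha b hb)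
      · intro a' b' hab h1 h2
        rw [SimpleGraph.deleteEdges_adj] at hab
        exact (SimpleGraph.deleteEdges_adj.mpr ⟨hstep a' b' hab.1 h1 h2, hab.2⟩).reachable
      · intro _
        exact ((hedel (Or.inl (by simp)) hu₁.symm).reachable).trans
          (hedel (Or.inl (by simp)) hu₂).reachable
      · intro _
        exact ((hedel (Or.inr (by simp)) hv₁.symm).reachable).trans
          (hedel (Or.inr (by simp)) hv₂).reachable
    have hlink : ∀ a, a ∈ U.verts → ∃ a', a' ∈ U'.verts ∧
        (U.graph.deleteEdges {s(x, y)}).Reachable a a' := by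
      intro a haV
      by_cases hau : a = u
      · subst hau
        exact ⟨u₁, hu₁V', (hedel (Or.inl (by simp)) hu₁).reachable⟩
      · by_cases hav : a = v
        · subst hav
          exact ⟨v₁, hv₁V', (hedel (Or.inr (by simp)) hv₁).reachable⟩
        · refine ⟨a, ?_, Reachable.refl _⟩
          rw [hU'v]
          refine ⟨haV, ?_⟩
          simp only [Set.mem_insert_iff, Set.mem_singleton_iff, not_or]
          exact ⟨hau, hav⟩
    intro a ha b hb
    obtain ⟨a', ha', hra⟩ := hlink a ha
    obtain ⟨b', hb', hrb⟩ := hlink b hb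
    exact hra.trans ((hkey a' b' ha' hb').trans hrb.symm)
  have hcut2 : ∀ w', (w' = u₁ ∨ w' = u₂) → U.IsCutEdge s(u, w') →
      U'.IsCutEdge s(u₁, u₂) := by
    intro w' hw' hcut
    have hw'u : w' ≠ u := by rcases hw' with rfl | rfl; exacts [hu₁u, hu₂u]
    have hw'v : w' ≠ v := by rcases hw' with rfl | rfl; exacts [hu₁v, hu₂v]
    have hnotv : v ∉ s(u, w') := by
      rw [Sym2.mem_iff]; push_neg; exact ⟨Ne.symm hueq, Ne.symm hw'v⟩
    have hedel : ∀ {z₁ z₂ : V}, v ∈ s(z₁, z₂) →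
        U.graph.Adj z₁ z₂ → (U.graph.deleteEdges {s(u, w')}).Adj z₁ z₂ := by
      intro z₁ z₂ hz hadj
      refine SimpleGraph.deleteEdges_adj.mpr ⟨hadj, ?_⟩
      intro hh
      have hh' : s(z₁, z₂) = s(u, w') := hh
      exact hnotv (hh' ▸ hz)
    refine ⟨(SimpleGraph.mem_edgeSet _).mpr hAdj'12, ?_⟩
    intro hC'
    apply hcut.2
    refine ⟨hconn.1, ?_⟩
    have hC2 : ∀ a ∈ U'.verts, ∀ b ∈ U'.verts,
        (U'.graph.deleteEdges {s(u₁, u₂)}).Reachable a b := hC'.2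
    have hkey : ∀ a b, a ∈ U'.verts → b ∈ U'.verts →
        (U.graph.deleteEdges {s(u, w')}).Reachable a b := by
      intro a b ha hb
      refine reach_up (u₁ := u₁) (u₂ := u₂) (v₁ := v₁) (v₂ := v₂) ?_ ?_ ?_ (hC2 a ha b hb)
      · intro a' b' hab h1 h2
        rw [SimpleGraph.deleteEdges_adj] at hab
        have hadj := hstep a' b' hab.1 h1 h2
        have hne' := hnotuv hab.1
        refine (SimpleGraph.deleteEdges_adj.mpr ⟨hadj, ?_⟩).reachable
        intro hh
        have hh' : s(a', b') = s(u, w') := hh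
        have : u ∈ s(a', b') := by rw [hh']; simp
        rcases Sym2.mem_iff.mp this with h' | h'
        · exact hne'.1.1 h'.symm
        · exact hne'.2.1 h'.symm
      · intro hh
        rw [SimpleGraph.deleteEdges_adj] at hh
        exact absurd rfl hh.2
      · intro _
        exact ((hedel (by simp) hv₁.symm).reachable).trans (hedel (by simp) hv₂).reachable
    have hadjuv : (U.graph.deleteEdges {s(u, w')}).Adj u v := by
      refine SimpleGraph.deleteEdges_adj.mpr ⟨huv, ?_⟩
      intro hh
      have hh' : s(u, v) = s(u, w') := hh
      rcases Sym2.eq_iff.mp hh' with ⟨_, h2⟩ | ⟨h1, _⟩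
      · exact hw'v h2.symm
      · exact hw'u h1.symm
    have hlink : ∀ a, a ∈ U.verts → ∃ a', a' ∈ U'.verts ∧
        (U.graph.deleteEdges {s(u, w')}).Reachable a a' := by
      intro a haV
      by_cases hau : a = u
      · subst hau
        exact ⟨v₁, hv₁V', hadjuv.reachable.trans (hedel (by simp) hv₁).reachable⟩
      · by_cases hav : a = v
        · subst hav
          exact ⟨v₁, hv₁V', (hedel (by simp) hv₁).reachable⟩
        · refine ⟨a, ?_, Reachable.refl _⟩
          rw [hU'v]
          refine ⟨haV, ?_⟩
          simp only [Set.mem_insert_iff, Set.mem_singleton_iff, not_or]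
          exact ⟨hau, hav⟩
    intro a ha b hb
    obtain ⟨a', ha', hra⟩ := hlink a ha
    obtain ⟨b', hb', hrb⟩ := hlink b hb
    exact hra.trans ((hkey a' b' ha' hb').trans hrb.symm)
  have hcut3 : ∀ w', (w' = v₁ ∨ w' = v₂) → U.IsCutEdge s(v, w') →
      U'.IsCutEdge s(v₁, v₂) := by
    intro w' hw' hcut
    have hw'v : w' ≠ v := by rcases hw' with rfl | rfl; exacts [hv₁v, hv₂v]
    have hw'u : w' ≠ u := by rcases hw' with rfl | rfl; exacts [hv₁u, hv₂u]
    have hnotu : u ∉ s(v, w') := by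
      rw [Sym2.mem_iff]; push_neg; exact ⟨hueq, Ne.symm hw'u⟩
    have hedel : ∀ {z₁ z₂ : V}, u ∈ s(z₁, z₂) →
        U.graph.Adj z₁ z₂ → (U.graph.deleteEdges {s(v, w')}).Adj z₁ z₂ := by
      intro z₁ z₂ hz hadj
      refine SimpleGraph.deleteEdges_adj.mpr ⟨hadj, ?_⟩
      intro hh
      have hh' : s(z₁, z₂) = s(v, w') := hh
      exact hnotu (hh' ▸ hz)
    refine ⟨(SimpleGraph.mem_edgeSet _).mpr hAdj'34, ?_⟩
    intro hC'
    apply hcut.2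
    refine ⟨hconn.1, ?_⟩
    have hC2 : ∀ a ∈ U'.verts, ∀ b ∈ U'.verts,
        (U'.graph.deleteEdges {s(v₁, v₂)}).Reachable a b := hC'.2
    have hkey : ∀ a b, a ∈ U'.verts → b ∈ U'.verts →
        (U.graph.deleteEdges {s(v, w')}).Reachable a b := by
      intro a b ha hb
      refine reach_up (u₁ := u₁) (u₂ := u₂) (v₁ := v₁) (v₂ := v₂) ?_ ?_ ?_ (hC2 a ha b hb)
      · intro a' b' hab h1 h2
        rw [SimpleGraph.deleteEdges_adj] at hab
        have hadj := hstep a' b' hab.1 h1 h2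
        have hne' := hnotuv hab.1
        refine (SimpleGraph.deleteEdges_adj.mpr ⟨hadj, ?_⟩).reachable
        intro hh
        have hh' : s(a', b') = s(v, w') := hh
        have : v ∈ s(a', b') := by rw [hh']; simp
        rcases Sym2.mem_iff.mp this with h' | h'
        · exact hne'.1.2 h'.symm
        · exact hne'.2.2 h'.symm
      · intro _
        exact ((hedel (by simp) hu₁.symm).reachable).trans (hedel (by simp) hu₂).reachable
      · intro hh
        rw [SimpleGraph.deleteEdges_adj] at hh
        exact absurd rfl hh.2
    have hadjvu : (U.graph.deleteEdges {s(v, w')}).Adj v u := by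
      refine SimpleGraph.deleteEdges_adj.mpr ⟨huv.symm, ?_⟩
      intro hh
      have hh' : s(v, u) = s(v, w') := hh
      rcases Sym2.eq_iff.mp hh' with ⟨_, h2⟩ | ⟨h1, _⟩
      · exact hw'u h2.symm
      · exact hw'v h1.symm
    have hlink : ∀ a, a ∈ U.verts → ∃ a', a' ∈ U'.verts ∧
        (U.graph.deleteEdges {s(v, w')}).Reachable a a' := by
      intro a haV
      by_cases hav : a = v
      · subst hav
        exact ⟨u₁, hu₁V', hadjvu.reachable.trans (hedel (by simp) hu₁).reachable⟩
      · by_cases hau : a = u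
        · subst hau
          exact ⟨u₁, hu₁V', (hedel (by simp) hu₁).reachable⟩
        · refine ⟨a, ?_, Reachable.refl _⟩
          rw [hU'v]
          refine ⟨haV, ?_⟩
          simp only [Set.mem_insert_iff, Set.mem_singleton_iff, not_or]
          exact ⟨hau, hav⟩
    intro a ha b hb
    obtain ⟨a', ha', hra⟩ := hlink a ha
    obtain ⟨b', hb', hrb⟩ := hlink b hb
    exact hra.trans ((hkey a' b' ha' hb').trans hrb.symm)
  -- the two parts of the conclusion
  refine ⟨⟨hconn', fun w hw => by rw [hdeg' w hw]; exact hdeg w (hmemuv hw).1, hleaves⟩, ?_⟩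
  -- 3-cuttability of U'
  intro r C' hC'
  have hsuppV' : ∀ x ∈ C'.support, (x ≠ u ∧ x ≠ v) := by
    intro x hx
    rcases supp_mem_aux C' x hx with rfl | ⟨y, hy⟩
    · cases C' with
      | nil => exact absurd rfl hC'.ne_nil
      | cons h p => exact (hnotuv h).1
    · exact (hnotuv hy).1
  have huC : u ∉ C'.support := fun h => (hsuppV' u h).1 rfl
  have hvC : v ∉ C'.support := fun h => (hsuppV' v h).2 rfl
  have hedgeC : ∀ e ∈ C'.edges, u ∉ e ∧ v ∉ e := by
    intro e he
    constructor <;> intro hx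
    · exact huC (mem_support_of_edge C' he hx)
    · exact hvC (mem_support_of_edge C' he hx)
  set C : U.graph.Walk r r := liftWalk hu₁ hu₂ hv₁ hv₂ hstep C' with hCdef
  have hCc : C.IsCycle :=
    liftWalk_isCycle hu₁ hu₂ hv₁ hv₂ hstep hueq hu₁₂ hv₁₂ hu₁v hu₂v hv₁u hv₂u
      C' hC' huC hvC hedgeC
  obtain ⟨x, y, P, hPp, hPl, hPs, hPe, hPcut⟩ := h3 C hCc
  have hPnu : u ∉ P.support := by
    intro hmem
    have huCsup : u ∈ C.support := hPs u hmem
    have h12C : s(u₁, u₂) ∈ C'.edges := by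
      by_contra hnin
      exact liftWalk_not_mem_support hu₁ hu₂ hv₁ hv₂ hstep C' huC (fun _ => hnin)
        (fun hh => absurd hh hueq) huCsup
    obtain ⟨m1, m2⟩ := liftWalk_edges_of_u hu₁ hu₂ hv₁ hv₂ hstep hEne C' h12C
    obtain ⟨e, hce, hue⟩ := hPcut u hmem
    obtain ⟨w', rfl⟩ := Sym2.mem_iff_exists.mp hue
    have hadjw : U.graph.Adj u w' := (SimpleGraph.mem_edgeSet _).mp hce.1
    rcases (hAdjU w').mp hadjw with h' | h' | h'
    · rw [h'] at hce
      exact hnc hce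
    · rw [h'] at hce
      exact not_cutEdge_of_mem_cycle U hconn C hCc m1 hce
    · rw [h'] at hce
      exact not_cutEdge_of_mem_cycle U hconn C hCc m2 hce
  have hPnv : v ∉ P.support := by
    intro hmem
    have hvCsup : v ∈ C.support := hPs v hmem
    have h34C : s(v₁, v₂) ∈ C'.edges := by
      by_contra hnin
      exact liftWalk_not_mem_support hu₁ hu₂ hv₁ hv₂ hstep C' hvC
        (fun hh => absurd hh (Ne.symm hueq)) (fun _ => hnin) hvCsup
    obtain ⟨m1, m2⟩ := liftWalk_edges_of_v hu₁ hu₂ hv₁ hv₂ hstep hEne C' h34C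
    obtain ⟨e, hce, hve⟩ := hPcut v hmem
    obtain ⟨w', rfl⟩ := Sym2.mem_iff_exists.mp hve
    have hadjw : U.graph.Adj v w' := (SimpleGraph.mem_edgeSet _).mp hce.1
    rcases (hAdjV w').mp hadjw with h' | h' | h'
    · rw [h', show s(v, u) = s(u, v) from Sym2.eq_swap] at hce
      exact hnc hce
    · rw [h'] at hce
      exact not_cutEdge_of_mem_cycle U hconn C hCc m1 hce
    · rw [h'] at hce
      exact not_cutEdge_of_mem_cycle U hconn C hCc m2 hce
  have hPeC' : ∀ e ∈ P.edges, e ∈ C'.edges := by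
    intro e he
    have heC := hPe e he
    have heu : u ∉ e := fun hx => hPnu (mem_support_of_edge P he hx)
    have hev : v ∉ e := fun hx => hPnv (mem_support_of_edge P he hx)
    rcases liftWalk_mem_edges hu₁ hu₂ hv₁ hv₂ hstep C' heC with h' | ⟨h1, _⟩ | ⟨h1, _⟩
    · exact h'
    · exfalso
      rcases h1 with rfl | rfl <;> exact heu (by simp)
    · exfalso
      rcases h1 with rfl | rfl <;> exact hev (by simp)
  have hTE : ∀ e ∈ P.edges, e ∈ U'.graph.edgeSet :=
    fun e he => C'.edges_subset_edgeSet (hPeC' e he)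
  refine ⟨x, y, P.transfer U'.graph hTE, hPp.transfer hTE, ?_, ?_, ?_, ?_⟩
  · rw [SimpleGraph.Walk.support_transfer]
    exact hPl
  · intro z hz
    rw [SimpleGraph.Walk.support_transfer] at hz
    have hzC := hPs z hz
    rcases liftWalk_mem_support hu₁ hu₂ hv₁ hv₂ hstep C' hzC with h' | rfl | rfl
    · exact h'
    · exact absurd hz hPnu
    · exact absurd hz hPnv
  · intro e he
    rw [SimpleGraph.Walk.edges_transfer] at he
    exact hPeC' e he
  · intro z hz
    rw [SimpleGraph.Walk.support_transfer] at hz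
    obtain ⟨e, hce, hze⟩ := hPcut z hz
    have hzu : z ≠ u := fun hh => hPnu (hh ▸ hz)
    have hzv : z ≠ v := fun hh => hPnv (hh ▸ hz)
    by_cases hue : u ∈ e
    · obtain ⟨w', rfl⟩ := Sym2.mem_iff_exists.mp hue
      have hadjw : U.graph.Adj u w' := (SimpleGraph.mem_edgeSet _).mp hce.1
      have hzw : z = w' := by
        rcases Sym2.mem_iff.mp hze with h' | h'
        · exact absurd h' hzu
        · exact h'
      rcases (hAdjU w').mp hadjw with h' | h' | h'
      · rw [h'] at hce
        exact absurd hce hnc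
      · exact ⟨s(u₁, u₂), hcut2 w' (Or.inl h') hce, by rw [hzw, h']; simp⟩
      · exact ⟨s(u₁, u₂), hcut2 w' (Or.inr h') hce, by rw [hzw, h']; simp⟩
    · by_cases hve : v ∈ e
      · obtain ⟨w', rfl⟩ := Sym2.mem_iff_exists.mp hve
        have hadjw : U.graph.Adj v w' := (SimpleGraph.mem_edgeSet _).mp hce.1
        have hzw : z = w' := by
          rcases Sym2.mem_iff.mp hze with h' | h'
          · exact absurd h' hzv
          · exact h'
        rcases (hAdjV w').mp hadjw with h' | h' | h'
        · rw [h'] at hue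
          exact absurd hue (by simp)
        · exact ⟨s(v₁, v₂), hcut3 w' (Or.inl h') hce, by rw [hzw, h']; simp⟩
        · exact ⟨s(v₁, v₂), hcut3 w' (Or.inr h') hce, by rw [hzw, h']; simp⟩
      · revert hce hze hue hve
        induction e using Sym2.ind with
        | _ p q =>
          intro hce hze hue hve
          refine ⟨s(p, q), hcut1 p q hce ?_ ?_, hze⟩
          · simp only [Set.mem_insert_iff, Set.mem_singleton_iff, not_or]
            constructor
            · rintro rfl; exact hue (by simp)
            · rintro rfl; exact hve (by simp)
          · simp only [Set.mem_insert_iff, Set.mem_singleton_iff, not_or]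
            constructor
            · rintro rfl; exact hue (by simp)
            · rintro rfl; exact hve (by simp)
end

section
/- Let T be an unrooted binary phylogenetic X-tree, let U be a 3-cuttable unrooted binary phylogenetic network on X, let e be a non-cut-edge of U, and let U' be the graph obtained from U by eliminating e. If U' displays T, then U displays T. -/
namespace Net

variable {V : Type}

/-- `T` is an unrooted binary phylogenetic `X`-tree: an unrooted binary phylogenetic
network on `X` with no cycles. -/
def IsTree (T : Net V) (X : Set V) : Prop := T.IsUBPN X ∧ T.graph.IsAcyclic

/-- `(fv, fe)` is an embedding of the tree `T` in the network `U` (both with label set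
`X`): `fv` maps vertices of `T` to vertices of `U` fixing the leaves, injectively, and
`fe` maps each edge of `T` to a path in `U` between the images of its endpoints, the
paths of distinct edges being pairwise edge-disjoint. -/
def IsEmbedding (T U : Net V) (X : Set V) (fv : V → V)
    (fe : ∀ ⦃a b : V⦄, T.graph.Adj a b → U.graph.Walk (fv a) (fv b)) : Prop :=
  (∀ a ∈ T.verts, fv a ∈ U.verts) ∧
  (∀ x ∈ X, fv x = x) ∧
  (∀ a ∈ T.verts, ∀ b ∈ T.verts, fv a = fv b → a = b) ∧
  (∀ ⦃a b : V⦄ (h : T.graph.Adj a b), (fe h).IsPath) ∧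
  (∀ ⦃a b c d : V⦄ (h : T.graph.Adj a b) (h' : T.graph.Adj c d), s(a, b) ≠ s(c, d) →
    ∀ e ∈ (fe h).edges, e ∉ (fe h').edges)

/-- `U` displays `T`: there is an embedding of `T` in `U` (equivalently, a subgraph of
`U` is a subdivision of `T`). -/
def Displays (U T : Net V) (X : Set V) : Prop :=
  ∃ (fv : V → V) (fe : ∀ ⦃a b : V⦄, T.graph.Adj a b → U.graph.Walk (fv a) (fv b)),
    IsEmbedding T U X fv fe

end Net

open Net

/-! Eliminating `uv` only shortens the detours `u₁ u u₂` and `v₁ v v₂` to edges, so an embedding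
of `T` in `U'` lifts to `U` by routing the new edges back through `u` and `v`; taking the bypass of
each lifted walk restores paths without creating new edges. -/

namespace SimpleGraph.Walk

variable {V : Type} {G G' : SimpleGraph V}

def bind (f : ∀ ⦃a b : V⦄, G'.Adj a b → G.Walk a b) : ∀ {x y : V}, G'.Walk x y → G.Walk x y
  | _, _, nil => nil
  | _, _, cons h p => (f h).append (p.bind f)

theorem mem_edges_bind {f : ∀ ⦃a b : V⦄, G'.Adj a b → G.Walk a b} {x y : V}
    {p : G'.Walk x y} {e : Sym2 V} (he : e ∈ (p.bind f).edges) :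
    ∃ (a b : V) (h : G'.Adj a b), s(a, b) ∈ p.edges ∧ e ∈ (f h).edges := by
  induction p with
  | nil => simp [bind] at he
  | cons h p ih =>
    rw [bind, edges_append, List.mem_append] at he
    rcases he with he | he
    · exact ⟨_, _, h, by simp, he⟩
    · obtain ⟨a, b, h', hab, he'⟩ := ih he
      exact ⟨a, b, h', by simp [hab], he'⟩

end SimpleGraph.Walk

namespace Net

variable {V : Type}

/-- `π` traces every edge of `U` used to realise an edge `ab` of `U'` back to `ab`, so the
realisations of distinct edges of `U'` are edge-disjoint. -/
theorem Displays.of_edge_replacement {T U U' : Net V} {X : Set V} (hd : U'.Displays T X)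
    (hverts : U'.verts ⊆ U.verts) (π : Sym2 V → Sym2 V)
    (hrep : ∀ a b, U'.graph.Adj a b → ∃ w : U.graph.Walk a b, ∀ e ∈ w.edges, π e = s(a, b)) :
    U.Displays T X := by
  classical
  obtain ⟨fv, fe, hmem, hfix, hinj, -, hdisj⟩ := hd
  choose f hf using hrep
  have hπ : ∀ {x y : V} (p : U'.graph.Walk x y), ∀ e ∈ (p.bind f).bypass.edges, π e ∈ p.edges := by
    intro x y p e he
    obtain ⟨a, b, h, hab, he⟩ :=
      SimpleGraph.Walk.mem_edges_bind ((p.bind f).edges_bypass_subset_edges he)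
    rwa [hf a b h e he]
  refine ⟨fv, fun _ _ h => ((fe h).bind f).bypass, fun a ha => hverts (hmem a ha), hfix, hinj,
    fun _ _ h => ((fe h).bind f).bypass_isPath, ?_⟩
  intro a b c d h h' hne e he he'
  exact hdisj h h' hne _ (hπ _ e he) (hπ _ e he')

end Net

theorem displays_of_eliminate_displays_general {V : Type}
    (U T : Net V) (X : Set V)
    (u v u₁ u₂ v₁ v₂ : V)
    (huv : U.graph.Adj u v)
    (hu₁ : U.graph.Adj u u₁) (hu₂ : U.graph.Adj u u₂)
    (hv₁ : U.graph.Adj v v₁) (hv₂ : U.graph.Adj v v₂)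
    (hv₁u : v₁ ≠ u) (hv₂u : v₂ ≠ u)
    (U' : Net V)
    (hU'v : U'.verts = U.verts \ {u, v})
    (hU'a : ∀ a b, U'.graph.Adj a b ↔
      ((U.graph.Adj a b ∧ a ∉ ({u, v} : Set V) ∧ b ∉ ({u, v} : Set V)) ∨
        (a = u₁ ∧ b = u₂) ∨ (a = u₂ ∧ b = u₁) ∨
        (a = v₁ ∧ b = v₂) ∨ (a = v₂ ∧ b = v₁)))
    (hd : U'.Displays T X) : U.Displays T X := by
  classical
  refine hd.of_edge_replacement (fun a ha => (hU'v ▸ ha).1)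
    (fun e => if u ∈ e then s(u₁, u₂) else if v ∈ e then s(v₁, v₂) else e) ?_
  have hne : u ≠ v := huv.ne
  intro a b hab
  rcases (hU'a a b).1 hab with ⟨h, ha, hb⟩ | ⟨rfl, rfl⟩ | ⟨rfl, rfl⟩ | ⟨rfl, rfl⟩ | ⟨rfl, rfl⟩
  · simp only [Set.mem_insert_iff, Set.mem_singleton_iff, not_or] at ha hb
    exact ⟨h.toWalk, by simp [Ne.symm ha.1, Ne.symm ha.2, Ne.symm hb.1, Ne.symm hb.2]⟩
  · exact ⟨.cons hu₁.symm (.cons hu₂ .nil), by simp⟩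
  · exact ⟨.cons hu₂.symm (.cons hu₁ .nil), by simp [Sym2.eq_swap]⟩
  · exact ⟨.cons hv₁.symm (.cons hv₂ .nil), by simp [hne, hv₁u.symm, hv₂u.symm]⟩
  · exact ⟨.cons hv₂.symm (.cons hv₁ .nil), by simp [hne, hv₁u.symm, hv₂u.symm, Sym2.eq_swap]⟩

/-- Let `T` be an unrooted binary phylogenetic `X`-tree, let `U` be a
`3`-cuttable unrooted binary phylogenetic network on `X`, let `e = {u, v}` be a
non-cut-edge of `U` (with further neighbors `u₁, u₂` of `u` and `v₁, v₂` of `v`), and let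
`U'` be obtained from `U` by eliminating `e`.  If `U'` displays `T`, then `U` displays
`T`. -/
theorem displays_of_eliminate_displays {V : Type} [Fintype V]
    (U T : Net V) (X : Set V) (hU : U.IsUBPN X) (h3 : U.QCuttable 3)
    (hT : T.IsTree X)
    (u v u₁ u₂ v₁ v₂ : V)
    (huv : U.graph.Adj u v) (hnc : ¬ U.IsCutEdge s(u, v))
    (hu₁ : U.graph.Adj u u₁) (hu₂ : U.graph.Adj u u₂)
    (hv₁ : U.graph.Adj v v₁) (hv₂ : U.graph.Adj v v₂)
    (hu₁₂ : u₁ ≠ u₂) (hu₁v : u₁ ≠ v) (hu₂v : u₂ ≠ v)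
    (hv₁₂ : v₁ ≠ v₂) (hv₁u : v₁ ≠ u) (hv₂u : v₂ ≠ u)
    (U' : Net V)
    (hU'v : U'.verts = U.verts \ {u, v})
    (hU'a : ∀ a b, U'.graph.Adj a b ↔
      ((U.graph.Adj a b ∧ a ∉ ({u, v} : Set V) ∧ b ∉ ({u, v} : Set V)) ∨
        (a = u₁ ∧ b = u₂) ∨ (a = u₂ ∧ b = u₁) ∨
        (a = v₁ ∧ b = v₂) ∨ (a = v₂ ∧ b = v₁)))
    (hd : U'.Displays T X) : U.Displays T X :=
  displays_of_eliminate_displays_general U T X u v u₁ u₂ v₁ v₂ huv hu₁ hu₂ hv₁ hv₂ hv₁u hv₂u U' hU'v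
    hU'a hd
end

section
/- Let U be a 3-cuttable unrooted binary phylogenetic network on X, let T be an unrooted binary phylogenetic X-tree displayed by U, and let φ be an embedding of T in U. Then for every edge {u,w} of T, the path φ({u,w}) in U is entangled. -/
namespace Net

variable {V : Type}

/-- A path `P` (from `x` to `y`) in `N` is entangled if none of its internal vertices is
incident to a cut-edge of `N` that is not an edge of `P`. -/
def Entangled (N : Net V) {x y : V} (P : N.graph.Walk x y) : Prop :=
  ∀ w ∈ P.support, w ≠ x → w ≠ y → ∀ e, N.IsCutEdge e → w ∈ e → e ∈ P.edges

end Net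

namespace SimpleGraph

variable {V : Type} {G : SimpleGraph V}

def edgeSide (G : SimpleGraph V) (p q : V) : Set V :=
  {y | (G.deleteEdges {s(p, q)}).Reachable y q}

theorem IsAcyclic.exists_existsUnique_adj [Finite V] (hG : G.IsAcyclic) {a b : V}
    (hab : G.Adj a b) : ∃ u, ∃! w, G.Adj u w := by
  have : Nonempty V := ⟨a⟩
  obtain ⟨u, v, p, hp, hmax⟩ := Walk.exists_isPath_forall_isPath_length_le_length G
  have hnil : ¬ p.Nil := fun hnil => by
    have := hmax _ _ (Walk.cons hab Walk.nil) (by simp [hab.ne])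
    simp [hnil.length_eq_zero] at this
  refine ⟨u, p.snd, p.adj_snd hnil, fun w hw => hG.eq_snd_of_adj_start hp hw ?_⟩
  by_contra hwp
  have := hmax _ _ (p.cons hw.symm) (hp.cons hwp)
  simp at this

theorem exists_isCycle_of_forall_exists_two_adj [Finite V] {S : Set V} (hS : S.Nonempty)
    (h : ∀ x ∈ S, ∃ y₁ ∈ S, ∃ y₂ ∈ S, y₁ ≠ y₂ ∧ G.Adj x y₁ ∧ G.Adj x y₂) :
    ∃ (u : V) (c : G.Walk u u), c.IsCycle ∧ ∀ v ∈ c.support, v ∈ S := by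
  by_contra! hno
  have hacyc : (G.induce S).IsAcyclic := fun u c hc => by
    obtain ⟨v, hv, hvS⟩ :=
      hno _ _ (hc.map (f := (Embedding.induce (G := G) S).toHom) Subtype.val_injective)
    simp only [Walk.support_map, List.mem_map] at hv
    obtain ⟨v', -, rfl⟩ := hv
    exact hvS v'.2
  obtain ⟨x, hx⟩ := hS
  obtain ⟨y, hy, -, -, -, hxy, -⟩ := h x hx
  obtain ⟨u, w, -, hw⟩ := hacyc.exists_existsUnique_adj (a := ⟨x, hx⟩) (b := ⟨y, hy⟩) hxy
  obtain ⟨y₁, hy₁, y₂, hy₂, hne, h₁, h₂⟩ := h u u.2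
  exact hne (congrArg Subtype.val ((hw ⟨y₁, hy₁⟩ h₁).trans (hw ⟨y₂, hy₂⟩ h₂).symm))

theorem Walk.IsPath.exists_mem_edges_of_mem_support {x y w : V} {P : G.Walk x y}
    (hP : P.IsPath) (hw : w ∈ P.support) (hwx : w ≠ x) (hwy : w ≠ y) :
    ∃ u₁ u₂, u₁ ≠ u₂ ∧ s(w, u₁) ∈ P.edges ∧ s(w, u₂) ∈ P.edges := by
  obtain ⟨P₁, P₂, rfl⟩ := Walk.mem_support_iff_exists_append.mp hw
  have h₁ : s(w, P₁.penultimate) ∈ P₁.edges :=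
    Sym2.eq_swap ▸ P₁.mk_penultimate_end_mem_edges (Walk.not_nil_of_ne hwx.symm)
  have h₂ := P₂.mk_start_snd_mem_edges (Walk.not_nil_of_ne hwy)
  have hnd := hP.isTrail.edges_nodup
  rw [Walk.edges_append] at hnd
  refine ⟨P₁.penultimate, P₂.snd, fun h => List.disjoint_of_nodup_append hnd h₁ (h ▸ h₂), ?_, ?_⟩
  all_goals simp [h₁, h₂]

theorem reachable_deleteEdges_of_not_reachable {p q u y : V} (hqu : ¬ G.Reachable q u)
    (hy : G.Reachable y u) : (G.deleteEdges {s(p, q)}).Reachable y u := by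
  classical
  obtain ⟨W⟩ := hy
  by_cases he : s(p, q) ∈ W.edges
  · exact absurd ⟨W.dropUntil q (W.snd_mem_support_of_mem_edges he)⟩ hqu
  · exact (W.toDeleteEdge _ he).reachable

theorem reachable_deleteEdges_of_reachable {p q a b : V}
    (hpq : (G.deleteEdges {s(p, q)}).Reachable p q) (h : G.Reachable a b) :
    (G.deleteEdges {s(p, q)}).Reachable a b := by
  obtain ⟨W⟩ := h
  induction W with
  | nil => rfl
  | @cons x y _ hxy _ ih =>
    refine Reachable.trans ?_ ih
    by_cases he : s(x, y) = s(p, q)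
    · rcases Sym2.eq_iff.mp he with ⟨rfl, rfl⟩ | ⟨rfl, rfl⟩
      exacts [hpq, hpq.symm]
    · exact (deleteEdges_adj.mpr ⟨hxy, he⟩).reachable

theorem edgeSide_ssubset {p q u v : V} (hvu : G.IsBridge s(v, u)) (hv : v ∈ G.edgeSide p q)
    (hu : u ∈ G.edgeSide p q) (hqu : ¬ (G.deleteEdges {s(v, u)}).Reachable q u) :
    G.edgeSide v u ⊂ G.edgeSide p q := by
  refine (Set.ssubset_iff_of_subset fun y hy => ?_).mpr ⟨v, hv, hvu⟩
  exact ((reachable_deleteEdges_of_not_reachable hqu hy).mono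
    (deleteEdges_mono (deleteEdges_le _))).trans hu

theorem IsBridge.edgeSide_ssubset_or {p q u v : V} (hvu : G.IsBridge s(v, u))
    (hv : v ∈ G.edgeSide p q) (hu : u ∈ G.edgeSide p q) :
    G.edgeSide v u ⊂ G.edgeSide p q ∨ G.edgeSide u v ⊂ G.edgeSide p q := by
  by_cases hqu : (G.deleteEdges {s(v, u)}).Reachable q u
  · refine .inr (edgeSide_ssubset (Sym2.eq_swap ▸ hvu) hu hv fun hqv => ?_)
    rw [Sym2.eq_swap] at hqv
    exact hvu (hqv.symm.trans hqu)
  · exact .inl (edgeSide_ssubset hvu hv hu hqu)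

end SimpleGraph

namespace Net

open SimpleGraph

variable {V : Type} {U : Net V}

theorem mem_verts_of_reachable {x y : V} (hy : y ∈ U.verts) (h : U.graph.Reachable x y) :
    x ∈ U.verts := by
  obtain ⟨W⟩ := h
  cases W with
  | nil => exact hy
  | cons hadj _ => exact (U.support hadj).1

theorem IsCutEdge.isBridge (hU : U.ConnectedOn) {e : Sym2 V} (he : U.IsCutEdge e) :
    U.graph.IsBridge e := by
  induction e using Sym2.ind with
  | _ p q =>
    exact fun hpq =>
      he.2 ⟨hU.1, fun a ha b hb => reachable_deleteEdges_of_reachable hpq (hU.2 a ha b hb)⟩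

theorem QCuttable.mono {q q' : ℕ} (h : U.QCuttable q') (hq : q ≤ q') : U.QCuttable q :=
  fun _ C hC =>
    let ⟨x, y, P, hP, hlen, hPC⟩ := h C hC
    ⟨x, y, P, hP, hq.trans hlen, hPC⟩

theorem QCuttable.exists_isCutEdge_of_isCycle (h2 : U.QCuttable 2) {r : V}
    {C : U.graph.Walk r r} (hC : C.IsCycle) (q : V) :
    ∃ v ∈ C.support, v ≠ q ∧ ∃ u, U.IsCutEdge s(v, u) := by
  obtain ⟨x, y, P, hP, hlen, hPC, -, hcut⟩ := h2 C hC
  obtain ⟨v, hvP, hvq⟩ : ∃ v ∈ P.support, v ≠ q := by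
    by_contra! hall
    have := hP.support_nodup
    rw [List.eq_replicate_iff.mpr ⟨rfl, hall⟩, List.nodup_replicate] at this
    omega
  obtain ⟨e, he, hve⟩ := hcut v hvP
  exact ⟨v, hPC v hvP, hvq, Sym2.Mem.other hve, (Sym2.other_spec hve).symm ▸ he⟩

theorem exists_adj_adj_ne_of_two_lt_deg {x : V} (hx : 2 < U.deg x) (z : V) :
    ∃ y₁ y₂, y₁ ≠ y₂ ∧ y₁ ≠ z ∧ y₂ ≠ z ∧ U.graph.Adj x y₁ ∧ U.graph.Adj x y₂ := by
  have hfin : (U.graph.neighborSet x).Finite := Set.finite_of_ncard_pos (by unfold deg at hx; omega)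
  have hlt : 1 < (U.graph.neighborSet x \ {z}).ncard := by
    have := Set.pred_ncard_le_ncard_sdiff_singleton (U.graph.neighborSet x) z
    unfold deg at hx
    omega
  obtain ⟨y₁, y₂, ⟨hy₁, hy₁z⟩, ⟨hy₂, hy₂z⟩, hne⟩ := (Set.one_lt_ncard_iff hfin.sdiff).mp hlt
  exact ⟨y₁, y₂, hne, hy₁z, hy₂z, hy₁, hy₂⟩

variable {X : Set V}

theorem IsUBPN.deg_eq_three [Finite V] (hU : U.IsUBPN X) {x y w : V} {P : U.graph.Walk x y}
    (hP : P.IsPath) (hw : w ∈ P.support) (hwx : w ≠ x) (hwy : w ≠ y) : U.deg w = 3 := by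
  obtain ⟨u₁, u₂, hne, h₁, h₂⟩ := hP.exists_mem_edges_of_mem_support hw hwx hwy
  have hsub : ({u₁, u₂} : Set V) ⊆ U.graph.neighborSet w := by
    rintro m (rfl | rfl)
    exacts [P.adj_of_mem_edges h₁, P.adj_of_mem_edges h₂]
  have h2 := Set.ncard_le_ncard hsub
  rw [Set.ncard_pair hne] at h2
  have := hU.2.1 w (U.support (P.adj_of_mem_edges h₁)).1
  unfold deg at *
  omega

theorem eq_of_adj_of_notMem_edges [Finite V] {x y w z t : V} (hdeg : U.deg w ≤ 3)
    {P : U.graph.Walk x y} (hP : P.IsPath) (hw : w ∈ P.support) (hwx : w ≠ x) (hwy : w ≠ y)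
    (hz : U.graph.Adj w z) (hzP : s(w, z) ∉ P.edges) (ht : U.graph.Adj w t)
    (htP : s(w, t) ∉ P.edges) : t = z := by
  obtain ⟨u₁, u₂, hne, h₁, h₂⟩ := hP.exists_mem_edges_of_mem_support hw hwx hwy
  by_contra htz
  have hsub : ({t, u₁, u₂, z} : Set V) ⊆ U.graph.neighborSet w := by
    rintro m (rfl | rfl | rfl | rfl)
    exacts [ht, P.adj_of_mem_edges h₁, P.adj_of_mem_edges h₂, hz]
  have hcard : ({t, u₁, u₂, z} : Set V).ncard = 4 := by
    have htu₁ : t ≠ u₁ := by rintro rfl; exact htP h₁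
    have htu₂ : t ≠ u₂ := by rintro rfl; exact htP h₂
    have hu₁z : u₁ ≠ z := by rintro rfl; exact hzP h₁
    have hu₂z : u₂ ≠ z := by rintro rfl; exact hzP h₂
    rw [Set.ncard_insert_of_notMem (by simp [htu₁, htu₂, htz]),
      Set.ncard_insert_of_notMem (by simp [hne, hu₁z]), Set.ncard_pair hu₂z]
  have := Set.ncard_le_ncard hsub
  unfold deg at hdeg
  omega

theorem IsUBPN.exists_isCycle_of_edgeSide [Finite V] (hU : U.IsUBPN X) {p q : V}
    (hpq : U.IsCutEdge s(p, q)) (hX : ∀ x ∈ X, x ∉ U.graph.edgeSide p q) :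
    ∃ (r : V) (C : U.graph.Walk r r), C.IsCycle ∧ ∀ v ∈ C.support, v ∈ U.graph.edgeSide p q := by
  set S := U.graph.edgeSide p q
  set H := U.graph.deleteEdges {s(p, q)}
  have hqV : q ∈ U.verts := (U.support hpq.1).2
  have hpS : p ∉ S := hpq.isBridge hU.1
  have hS : ∀ x ∈ S, ∃ y₁ ∈ S, ∃ y₂ ∈ S, y₁ ≠ y₂ ∧ H.Adj x y₁ ∧ H.Adj x y₂ := by
    intro x hx
    have hxV : x ∈ U.verts := mem_verts_of_reachable hqV (hx.mono (deleteEdges_le _))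
    have hx3 : U.deg x = 3 :=
      (hU.2.1 x hxV).resolve_left fun h1 => hX x (hU.2.2 ▸ ⟨hxV, h1⟩) hx
    obtain ⟨y₁, y₂, hne, hy₁p, hy₂p, h₁, h₂⟩ :=
      exists_adj_adj_ne_of_two_lt_deg (by omega : 2 < U.deg x) p
    have hxp : x ≠ p := fun h => hpS (h ▸ hx)
    have hadj : ∀ y, U.graph.Adj x y → y ≠ p → H.Adj x y :=
      fun y hy hyp => deleteEdges_adj.mpr ⟨hy, by simp [hxp, hyp]⟩
    exact ⟨y₁, (hadj y₁ h₁ hy₁p).symm.reachable.trans hx, y₂,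
      (hadj y₂ h₂ hy₂p).symm.reachable.trans hx, hne, hadj y₁ h₁ hy₁p, hadj y₂ h₂ hy₂p⟩
  obtain ⟨r, C, hC, hCS⟩ := exists_isCycle_of_forall_exists_two_adj ⟨q, .refl q⟩ hS
  exact ⟨r, C.mapLe (deleteEdges_le _), hC.mapLe _, by simpa using hCS⟩

theorem IsUBPN.exists_mem_edgeSide_of_isCutEdge [Finite V] (hU : U.IsUBPN X)
    (h2 : U.QCuttable 2) {p q : V} (hpq : U.IsCutEdge s(p, q)) :
    ∃ x ∈ X, x ∈ U.graph.edgeSide p q := by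
  induction hn : (U.graph.edgeSide p q).ncard using Nat.strong_induction_on generalizing p q with
  | _ n ih =>
  by_contra! hX
  obtain ⟨r, C, hC, hCS⟩ := hU.exists_isCycle_of_edgeSide hpq hX
  obtain ⟨v, hvC, hvq, u, hvu⟩ := h2.exists_isCutEdge_of_isCycle hC q
  have hv := hCS v hvC
  have hvp : v ≠ p := fun h => hpq.isBridge hU.1 (h ▸ hv)
  have hu : u ∈ U.graph.edgeSide p q :=
    (deleteEdges_adj.mpr ⟨hvu.1, by simp [hvp, hvq]⟩).symm.reachable.trans hv
  obtain ⟨a, b, hab, hlt⟩ :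
      ∃ a b, s(a, b) = s(v, u) ∧ U.graph.edgeSide a b ⊂ U.graph.edgeSide p q :=
    ((hvu.isBridge hU.1).edgeSide_ssubset_or hv hu).elim (⟨v, u, rfl, ·⟩)
      (⟨u, v, Sym2.eq_swap, ·⟩)
  obtain ⟨x, hxX, hx⟩ := ih _ (hn ▸ Set.ncard_lt_ncard hlt) (hab ▸ hvu) rfl
  exact hX x hxX (hlt.subset hx)

end Net

namespace Net

open SimpleGraph

variable {V : Type} {T U : Net V} {X : Set V} {fv : V → V}
  {fe : ∀ ⦃a b : V⦄, T.graph.Adj a b → U.graph.Walk (fv a) (fv b)} {a b : V}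

theorem exists_walk_edges_mem_image (h : T.graph.Adj a b) {s t : V} (W : T.graph.Walk s t) :
    ∃ W' : U.graph.Walk (fv s) (fv t), ∀ e ∈ W'.edges, e ∈ (fe h).edges ∨
      ∃ (c d : V) (h' : T.graph.Adj c d), s(c, d) ≠ s(a, b) ∧ e ∈ (fe h').edges := by
  induction W with
  | nil => exact ⟨.nil, by simp⟩
  | @cons v u t hvu W ih =>
    obtain ⟨W', hW'⟩ := ih
    obtain ⟨Q, hQ⟩ : ∃ Q : U.graph.Walk (fv v) (fv u), ∀ e ∈ Q.edges, e ∈ (fe h).edges ∨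
        ∃ (c d : V) (h' : T.graph.Adj c d), s(c, d) ≠ s(a, b) ∧ e ∈ (fe h').edges := by
      by_cases hab : s(v, u) = s(a, b)
      · rcases Sym2.eq_iff.mp hab with ⟨rfl, rfl⟩ | ⟨rfl, rfl⟩
        · exact ⟨fe h, fun e he => .inl he⟩
        · exact ⟨(fe h).reverse, fun e he => .inl (by simpa using he)⟩
      · exact ⟨fe hvu, fun e he => .inr ⟨v, u, hvu, hab, he⟩⟩
    refine ⟨Q.append W', fun e he => ?_⟩
    rw [Walk.edges_append, List.mem_append] at he
    exact he.elim (hQ e) (hW' e)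

theorem exists_mem_edges_of_not_reachable (hT : T.ConnectedOn) {x w : V} {e : Sym2 V}
    (hx : x ∈ T.verts) (hfx : fv x = x) (h : T.graph.Adj a b) (hw : w ∈ (fe h).support)
    (heP : e ∉ (fe h).edges) (hwx : ¬ (U.graph.deleteEdges {e}).Reachable w x) :
    ∃ (c d : V) (h' : T.graph.Adj c d), s(c, d) ≠ s(a, b) ∧ e ∈ (fe h').edges := by
  classical
  obtain ⟨W⟩ := hT.2 a (T.support h).1 x hx
  obtain ⟨W', hW'⟩ := exists_walk_edges_mem_image (fe := fe) h W
  let R := ((fe h).takeUntil w hw).reverse.append (W'.copy rfl hfx)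
  have heR : e ∈ R.edges := by
    by_contra heR
    exact hwx (R.toDeleteEdge e heR).reachable
  simp only [R, Walk.edges_append, Walk.edges_reverse, Walk.edges_copy, List.mem_append,
    List.mem_reverse] at heR
  rcases heR with he | he
  · exact absurd ((fe h).edges_takeUntil_subset_edges hw he) heP
  · exact (hW' e he).resolve_left heP

theorem IsEmbedding.eq_or_eq_of_mem_edges (hemb : IsEmbedding T U X fv fe) {c d w z : V}
    (h : T.graph.Adj a b) (h' : T.graph.Adj c d) (hne : s(c, d) ≠ s(a, b))
    (honly : ∀ t, U.graph.Adj w t → s(w, t) ∉ (fe h).edges → t = z)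
    (he : s(w, z) ∈ (fe h').edges) : w = fv c ∨ w = fv d := by
  obtain ⟨-, -, -, hpath, hdisj⟩ := hemb
  by_contra! hcd
  obtain ⟨t₁, t₂, htt, h₁, h₂⟩ := (hpath h').exists_mem_edges_of_mem_support
    ((fe h').fst_mem_support_of_mem_edges he) hcd.1 hcd.2
  have hoff : ∀ t, s(w, t) ∈ (fe h').edges → t = z := fun t ht =>
    honly t ((fe h').adj_of_mem_edges ht) (hdisj h' h hne _ ht)
  exact htt ((hoff t₁ h₁).trans (hoff t₂ h₂).symm)

theorem IsEmbedding.mem_edges_of_adj (hemb : IsEmbedding T U X fv fe) {k m z : V}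
    (h : T.graph.Adj a b) (hka : fv k ≠ fv a) (hkb : fv k ≠ fv b) (hk : k ∈ T.verts)
    (hm : T.graph.Adj k m)
    (honly : ∀ t, U.graph.Adj (fv k) t → s(fv k, t) ∉ (fe h).edges → t = z) :
    s(fv k, z) ∈ (fe hm).edges := by
  obtain ⟨-, -, hinj, -, hdisj⟩ := hemb
  have hne : s(k, m) ≠ s(a, b) := fun hkm => by
    rcases Sym2.eq_iff.mp hkm with ⟨rfl, -⟩ | ⟨rfl, -⟩
    exacts [hka rfl, hkb rfl]
  have hnil : ¬ (fe hm).Nil :=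
    Walk.not_nil_of_ne fun hkm => hm.ne (hinj k hk m (T.support hm).2 hkm)
  have hsnd := (fe hm).mk_start_snd_mem_edges hnil
  rwa [honly _ ((fe hm).adj_snd hnil) (hdisj hm h hne _ hsnd)] at hsnd

end Net

open Net

theorem embedding_paths_entangled_general {V : Type} [Fintype V]
    (U T : Net V) (X : Set V) (hU : U.IsUBPN X) (h3 : U.QCuttable 3)
    (hT : T.IsTree X)
    (fv : V → V) (fe : ∀ ⦃a b : V⦄, T.graph.Adj a b → U.graph.Walk (fv a) (fv b))
    (hemb : IsEmbedding T U X fv fe) :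
    ∀ ⦃a b : V⦄ (h : T.graph.Adj a b), U.Entangled (fe h) := by
  have ⟨_, hfix, _, hpath, hdisj⟩ := hemb
  intro a b h w hw hwa hwb e he hwe
  by_contra heP
  obtain ⟨z, rfl⟩ : ∃ z, e = s(w, z) := ⟨_, (Sym2.other_spec hwe).symm⟩
  obtain ⟨x, hxX, hxz⟩ := hU.exists_mem_edgeSide_of_isCutEdge (h3.mono (by norm_num)) he
  have hxT : x ∈ T.verts := (hT.1.2.2 ▸ hxX : x ∈ T.leaves).1
  obtain ⟨c, d, h', hne, hzQ⟩ := exists_mem_edges_of_not_reachable hT.1.1 hxT (hfix x hxX) h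
    hw heP fun hwx => he.isBridge hU.1 (hwx.trans hxz)
  have hw3 := hU.deg_eq_three (hpath h) hw hwa hwb
  have honly : ∀ t, U.graph.Adj w t → s(w, t) ∉ (fe h).edges → t = z := fun t ht htP =>
    eq_of_adj_of_notMem_edges hw3.le (hpath h) hw hwa hwb he.1 heP ht htP
  obtain ⟨k, hk, rfl⟩ : ∃ k ∈ T.verts, fv k = w :=
    (hemb.eq_or_eq_of_mem_edges h h' hne honly hzQ).elim
      (fun hc => ⟨c, (T.support h').1, hc.symm⟩) (fun hd => ⟨d, (T.support h').2, hd.symm⟩)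
  have hkX : k ∉ X := fun hkX => by
    have : U.deg (fv k) = 1 := (hU.2.2 ▸ (hfix k hkX).symm ▸ hkX : fv k ∈ U.leaves).2
    omega
  have hk3 : T.deg k = 3 := (hT.1.2.1 k hk).resolve_left fun h1 => hkX (hT.1.2.2 ▸ ⟨hk, h1⟩)
  obtain ⟨m₁, m₂, hm, -, -, h₁, h₂⟩ := exists_adj_adj_ne_of_two_lt_deg (by omega : 2 < T.deg k) k
  exact hdisj h₁ h₂ (fun h => hm (Sym2.congr_right.mp h)) _
    (hemb.mem_edges_of_adj h hwa hwb hk h₁ honly) (hemb.mem_edges_of_adj h hwa hwb hk h₂ honly)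

/-- Let `U` be a `3`-cuttable unrooted binary phylogenetic network on
`X`, let `T` be an unrooted binary phylogenetic `X`-tree displayed by `U`, and let
`(fv, fe)` be an embedding of `T` in `U`.  Then for every edge of `T` the corresponding
path in `U` is entangled. -/
theorem embedding_paths_entangled {V : Type} [Fintype V]
    (U T : Net V) (X : Set V) (hU : U.IsUBPN X) (h3 : U.QCuttable 3)
    (hT : T.IsTree X) (hd : U.Displays T X)
    (fv : V → V) (fe : ∀ ⦃a b : V⦄, T.graph.Adj a b → U.graph.Walk (fv a) (fv b))
    (hemb : IsEmbedding T U X fv fe) :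
    ∀ ⦃a b : V⦄ (h : T.graph.Adj a b), U.Entangled (fe h) :=
  embedding_paths_entangled_general U T X hU h3 hT fv fe hemb
end

section
/- Let U be a simple 3-cuttable unrooted binary phylogenetic network, and let u and v be two vertices of U. Then there is at most one entangled path between u and v in U. -/
namespace Net

variable {V : Type}

/-- `N` is simple: every cut-edge of `N` is incident to a leaf. -/
def Simple (N : Net V) (X : Set V) : Prop :=
  ∀ e, N.IsCutEdge e → ∃ x ∈ X, x ∈ e

end Net

namespace SimpleGraph

variable {V : Type} {G : SimpleGraph V}

lemma reachable_deleteEdges_of_not_isBridge {x y a b : V} (h : ¬ G.IsBridge s(x, y))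
    (hab : G.Reachable a b) : (G.deleteEdges {s(x, y)}).Reachable a b := by
  rw [isBridge_iff, not_not] at h
  rw [reachable_iff_reflTransGen] at hab ⊢
  refine hab.lift' id fun c d hcd => ?_
  change Relation.ReflTransGen _ c d
  rw [← reachable_iff_reflTransGen]
  by_cases hcd' : s(c, d) = s(x, y)
  · rcases Sym2.eq_iff.mp hcd' with ⟨rfl, rfl⟩ | ⟨rfl, rfl⟩
    exacts [h, h.symm]
  · exact (deleteEdges_adj.mpr ⟨hcd, hcd'⟩).reachable

namespace Walk.IsPath

variable {u v w : V} {p : G.Walk u v}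

lemma ncard_neighborSet_toSubgraph_eq_two_of_ne (hp : p.IsPath) (hw : w ∈ p.support)
    (hwu : w ≠ u) (hwv : w ≠ v) : (p.toSubgraph.neighborSet w).ncard = 2 := by
  obtain ⟨i, rfl, hi⟩ := mem_support_iff_exists_getVert.mp hw
  refine hp.ncard_neighborSet_toSubgraph_internal_eq_two (fun h => hwu ?_) (lt_of_le_of_ne hi ?_)
  · simp [h]
  · rintro rfl
    simp at hwv

lemma eq_of_toSubgraph_adj_start (hp : p.IsPath) {z₁ z₂ : V} (h₁ : p.toSubgraph.Adj u z₁)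
    (h₂ : p.toSubgraph.Adj u z₂) : z₁ = z₂ :=
  (hp.snd_of_toSubgraph_adj h₁).symm.trans (hp.snd_of_toSubgraph_adj h₂)

lemma eq_of_toSubgraph_adj_end (hp : p.IsPath) {z₁ z₂ : V} (h₁ : p.toSubgraph.Adj v z₁)
    (h₂ : p.toSubgraph.Adj v z₂) : z₁ = z₂ := by
  rw [← toSubgraph_reverse] at h₁ h₂
  exact hp.reverse.eq_of_toSubgraph_adj_start h₁ h₂

end Walk.IsPath

end SimpleGraph

namespace Net

open SimpleGraph Walk

variable {V : Type} {N : Net V}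

lemma IsCutEdge.isBridge_s17 (hN : N.ConnectedOn) {e : Sym2 V} (he : N.IsCutEdge e) :
    N.graph.IsBridge e := by
  induction e using Sym2.ind with
  | _ x y =>
    by_contra hb
    exact he.2 ⟨hN.1, fun a ha b hb' => reachable_deleteEdges_of_not_isBridge hb (hN.2 a ha b hb')⟩

lemma QCuttable.exists_mem_support_isCutEdge (h3 : N.QCuttable 3) {r : V} {C : N.graph.Walk r r}
    (hC : C.IsCycle) (a b : V) :
    ∃ w ∈ C.support, w ≠ a ∧ w ≠ b ∧ ∃ e, N.IsCutEdge e ∧ w ∈ e := by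
  classical
  obtain ⟨x, y, P, hP, hlen, hPC, -, hcut⟩ := h3 C hC
  have hcard : ({a, b} : Finset V).card < P.support.toFinset.card := by
    rw [List.toFinset_card_of_nodup hP.support_nodup]
    exact Finset.card_le_two.trans_lt hlen
  obtain ⟨w, hw, hwab⟩ := Finset.exists_mem_notMem_of_card_lt_card hcard
  rw [List.mem_toFinset] at hw
  simp only [Finset.mem_insert, Finset.mem_singleton, not_or] at hwab
  exact ⟨w, hPC w hw, hwab.1, hwab.2, hcut w hw⟩

lemma Entangled.not_isCutEdge_of_isSubwalk {x y a b w : V} {P : N.graph.Walk x y}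
    (hP : P.IsPath) (hPe : N.Entangled P) {r : N.graph.Walk a b} (hr : r.IsSubwalk P)
    (hr_cut : ∀ f ∈ r.edges, ¬ N.IsCutEdge f) (hw : w ∈ r.support) (hwa : w ≠ a) (hwb : w ≠ b)
    {e : Sym2 V} (hwe : w ∈ e) : ¬ N.IsCutEdge e := by
  intro he
  have hr_le : ∀ {z}, r.toSubgraph.Adj w z → P.toSubgraph.Adj w z := fun h =>
    adj_toSubgraph_iff_mem_edges.mpr (hr.edges_subset (adj_toSubgraph_iff_mem_edges.mp h))
  have hr_two := (isPath_of_isSubwalk hr hP).ncard_neighborSet_toSubgraph_eq_two_of_ne hw hwa hwb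
  obtain ⟨z₁, z₂, hne, hz⟩ := Set.ncard_eq_two.mp hr_two
  have hz₁ : P.toSubgraph.Adj w z₁ := hr_le (show z₁ ∈ r.toSubgraph.neighborSet w by simp [hz])
  have hz₂ : P.toSubgraph.Adj w z₂ := hr_le (show z₂ ∈ r.toSubgraph.neighborSet w by simp [hz])
  have hwx : w ≠ x := by
    rintro rfl
    exact hne (hP.eq_of_toSubgraph_adj_start hz₁ hz₂)
  have hwy : w ≠ y := by
    rintro rfl
    exact hne (hP.eq_of_toSubgraph_adj_end hz₁ hz₂)
  have hnbr : r.toSubgraph.neighborSet w = P.toSubgraph.neighborSet w := by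
    have hP_two := hP.ncard_neighborSet_toSubgraph_eq_two_of_ne (hr.support_subset hw) hwx hwy
    exact Set.eq_of_subset_of_ncard_le (fun _ => hr_le) (hP_two.trans hr_two.symm).le
      (Set.finite_of_ncard_ne_zero (by omega))
  obtain ⟨z, rfl⟩ := Sym2.mem_iff_exists.mp hwe
  have hz : z ∈ P.toSubgraph.neighborSet w :=
    adj_toSubgraph_iff_mem_edges.mpr (hPe w (hr.support_subset hw) hwx hwy _ he hwe)
  rw [← hnbr] at hz
  exact hr_cut _ (adj_toSubgraph_iff_mem_edges.mp hz) he

end Net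

open Net

theorem entangled_path_unique_general {V : Type}
    (U : Net V) (X : Set V) (hU : U.IsUBPN X) (h3 : U.QCuttable 3)
    (u v : V) (P Q : U.graph.Walk u v)
    (hP : P.IsPath) (hQ : Q.IsPath)
    (hPe : U.Entangled P) (hQe : U.Entangled Q) :
    P = Q := by
  by_contra hne
  obtain ⟨a, b, p, q, hp, hq, hC⟩ := hP.exists_isCycle_of_ne hQ hne
  have hC_cut : ∀ f ∈ (p.append q.reverse).edges, ¬ U.IsCutEdge f := fun f hf he =>
    (he.isBridge_s17 hU.1).notMem_edges_of_isCycle hC hf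
  obtain ⟨w, hw, hwa, hwb, e, he, hwe⟩ := h3.exists_mem_support_isCutEdge hC a b
  rcases (SimpleGraph.Walk.mem_support_append_iff _ _).mp hw with hw | hw
  · exact hPe.not_isCutEdge_of_isSubwalk hP hp (fun f hf => hC_cut f (by simp [hf])) hw hwa hwb
      hwe he
  · exact hQe.not_isCutEdge_of_isSubwalk hQ hq (fun f hf => hC_cut f (by simp [hf]))
      (by simpa using hw) hwa hwb hwe he

/-- In a simple `3`-cuttable unrooted binary phylogenetic network,
there is at most one entangled path between any two vertices `u` and `v`. -/
theorem entangled_path_unique {V : Type} [Fintype V]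
    (U : Net V) (X : Set V) (hU : U.IsUBPN X) (hs : U.Simple X) (h3 : U.QCuttable 3)
    (u v : V) (P Q : U.graph.Walk u v)
    (hP : P.IsPath) (hQ : Q.IsPath)
    (hPe : U.Entangled P) (hQe : U.Entangled Q) :
    P = Q :=
  entangled_path_unique_general U X hU h3 u v P Q hP hQ hPe hQe
end

section
/- Let U be a simple 3-cuttable unrooted binary phylogenetic network on X, let T be an unrooted binary phylogenetic X-tree displayed by U, and let φ be an embedding of T in U. Let p be an internal vertex of T with neighbors q, u, and v. If q is not a leaf of T, then the concatenation of the paths φ({u,p}) and φ({p,v}) is an entangled path between φ(u) and φ(v) in U. -/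
open Net

/-!
A vertex `c` of `U` carrying two edges of `φ(up) ∪ φ(pv)` and incident to a cut-edge is, by
simplicity, adjacent to a leaf `x`, and every edge at `c` other than `cx` lies on
`φ(up) ∪ φ(pv)`. The tree neighbour of `x` must then be `p`: otherwise the image of that tree
edge (or, if it ends at `c`, the images of the two further tree edges there) would leave `c`
along an edge of `φ(up) ∪ φ(pv)`, against edge-disjointness. Hence `x ∈ {u, v}` and `cx` lies on
the concatenation, which gives entanglement. On a cycle inside `φ(up) ∪ φ(pv)` every vertex
incident to a cut-edge would thus be the unique neighbour of `u` or of `v`, so there are at most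
two of them, contradicting 3-cuttability; and two paths meeting outside `φ(p)` would close such
a cycle.
-/

open SimpleGraph

namespace SimpleGraph.Walk

variable {V : Type*} {G : SimpleGraph V}

lemma mk_start_mem_edges_of_neighborSet_eq_singleton {a b c : V} (W : G.Walk a b) (hab : a ≠ b)
    (ha : G.neighborSet a = {c}) : s(a, c) ∈ W.edges := by
  have hnil : ¬W.Nil := not_nil_of_ne hab
  have hsnd : W.snd ∈ G.neighborSet a := W.adj_snd hnil
  rw [ha, Set.mem_singleton_iff] at hsnd
  exact hsnd ▸ W.mk_start_snd_mem_edges hnil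

lemma mk_end_mem_edges_of_neighborSet_eq_singleton {a b c : V} (W : G.Walk a b) (hab : a ≠ b)
    (hb : G.neighborSet b = {c}) : s(b, c) ∈ W.edges := by
  simpa using W.reverse.mk_start_mem_edges_of_neighborSet_eq_singleton hab.symm hb

lemma IsCycle.exists_ne_mem_edges {r w : V} {C : G.Walk r r} (hC : C.IsCycle)
    (hw : w ∈ C.support) : ∃ n₁ n₂, n₁ ≠ n₂ ∧ s(w, n₁) ∈ C.edges ∧ s(w, n₂) ∈ C.edges := by
  classical
  have hC' := hC.rotate hw
  have hedges : ∀ e, e ∈ (C.rotate w hw).edges → e ∈ C.edges :=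
    fun e => (C.rotate_edges w hw).mem_iff.mp
  exact ⟨_, _, hC'.snd_ne_penultimate, hedges _ (mk_start_snd_mem_edges hC'.not_nil),
    hedges _ (Sym2.eq_swap ▸ mk_penultimate_end_mem_edges hC'.not_nil)⟩

lemma IsPath.exists_ne_mem_edges {a b w : V} {P : G.Walk a b} (hP : P.IsPath)
    (hw : w ∈ P.support) (hwa : w ≠ a) (hwb : w ≠ b) :
    ∃ n₁ n₂, n₁ ≠ n₂ ∧ s(w, n₁) ∈ P.edges ∧ s(w, n₂) ∈ P.edges := by
  classical
  have h₁ := (P.takeUntil w hw).mk_penultimate_end_mem_edges (not_nil_of_ne hwa.symm)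
  have h₂ := (P.dropUntil w hw).mk_start_snd_mem_edges (not_nil_of_ne hwb)
  rw [Sym2.eq_swap] at h₁
  refine ⟨_, _, fun h => hP.isTrail.disjoint_edges_takeUntil_dropUntil hw h₁ (by rwa [h]),
    P.edges_takeUntil_subset_edges hw h₁, P.edges_dropUntil_subset_edges hw h₂⟩

lemma exists_isCycle_of_isPath_ne {a b : V} {P Q : G.Walk a b} (hP : P.IsPath) (hQ : Q.IsPath)
    (hPQ : P ≠ Q) :
    ∃ (r : V) (C : G.Walk r r), C.IsCycle ∧ ∀ e ∈ C.edges, e ∈ P.edges ∨ e ∈ Q.edges := by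
  let H := G ⊓ fromEdgeSet {e | e ∈ P.edges ∨ e ∈ Q.edges}
  have hHG : H.edgeSet ⊆ G.edgeSet := edgeSet_mono inf_le_left
  have hH : ∀ e, e ∈ P.edges ∨ e ∈ Q.edges → e ∈ H.edgeSet := by
    rintro e he
    have hG : e ∈ G.edgeSet := he.elim (P.edges_subset_edgeSet ·) (Q.edges_subset_edgeSet ·)
    simpa [H, hG] using ⟨he, G.not_isDiag_of_mem_edgeSet hG⟩
  have hP' : ∀ e ∈ P.edges, e ∈ H.edgeSet := fun e he => hH e (.inl he)
  have hQ' : ∀ e ∈ Q.edges, e ∈ H.edgeSet := fun e he => hH e (.inr he)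
  have hback : ∀ (W : G.Walk a b) hW, (W.transfer H hW).transfer G
      (fun e he => hHG (edges_subset_edgeSet _ he)) = W := fun W hW => by
    rw [transfer_transfer, transfer_self]
  have hcyclic : ¬H.IsAcyclic := fun hacyc => hPQ <| by
    have := (isAcyclic_iff_subsingleton_path.mp hacyc a b).elim
      ⟨_, hP.transfer hP'⟩ ⟨_, hQ.transfer hQ'⟩
    rw [← hback P hP', ← hback Q hQ']
    simp only [Subtype.mk.injEq] at this
    simp only [this]
  simp only [IsAcyclic, not_forall, not_not] at hcyclic
  obtain ⟨r, C, hC⟩ := hcyclic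
  have hCG : ∀ e ∈ C.edges, e ∈ G.edgeSet := fun e he => hHG (C.edges_subset_edgeSet he)
  refine ⟨r, C.transfer G hCG, hC.transfer hCG, fun e he => ?_⟩
  rw [edges_transfer] at he
  have := C.edges_subset_edgeSet he
  simp only [H, edgeSet_inf, edgeSet_fromEdgeSet] at this
  exact this.2.1

end SimpleGraph.Walk

namespace Net

variable {V : Type} {N : Net V} {X : Set V}

lemma IsUBPN.deg_eq_one (hN : N.IsUBPN X) {x : V} (hx : x ∈ X) : N.deg x = 1 :=
  (hN.2.2 ▸ hx : x ∈ N.leaves).2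

lemma IsUBPN.neighborSet_eq_singleton (hN : N.IsUBPN X) {x c : V} (hx : x ∈ X)
    (hxc : N.graph.Adj x c) : N.graph.neighborSet x = {c} := by
  obtain ⟨a, ha⟩ := Set.ncard_eq_one.mp (hN.deg_eq_one hx)
  have hc : c ∈ N.graph.neighborSet x := hxc
  rw [ha, Set.mem_singleton_iff] at hc
  rw [ha, hc]

lemma IsUBPN.deg_eq_three_s18 (hN : N.IsUBPN X) {w n₁ n₂ : V} (h₁ : N.graph.Adj w n₁)
    (h₂ : N.graph.Adj w n₂) (hne : n₁ ≠ n₂) : N.deg w = 3 := by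
  rcases hN.2.1 w (N.support h₁).1 with h | h
  · have hle := Set.ncard_le_ncard (Set.pair_subset h₁ h₂ : {n₁, n₂} ⊆ N.graph.neighborSet w)
      (Set.finite_of_ncard_ne_zero (by rw [← deg, h]; omega))
    rw [Set.ncard_pair hne, ← deg, h] at hle
    omega
  · exact h

lemma IsUBPN.notMem_of_adj_of_adj (hN : N.IsUBPN X) {w n₁ n₂ : V} (h₁ : N.graph.Adj w n₁)
    (h₂ : N.graph.Adj w n₂) (hne : n₁ ≠ n₂) : w ∉ X := fun hw => by
  have := hN.deg_eq_three_s18 h₁ h₂ hne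
  rw [hN.deg_eq_one hw] at this
  omega

lemma IsUBPN.eq_or_eq_or_eq_of_adj (hN : N.IsUBPN X) {w n₁ n₂ n₃ z : V}
    (h₁ : N.graph.Adj w n₁) (h₂ : N.graph.Adj w n₂) (h₃ : N.graph.Adj w n₃)
    (h₁₂ : n₁ ≠ n₂) (h₁₃ : n₁ ≠ n₃) (h₂₃ : n₂ ≠ n₃) (hz : N.graph.Adj w z) :
    z = n₁ ∨ z = n₂ ∨ z = n₃ := by
  have hsub : ({n₁, n₂, n₃} : Set V) ⊆ N.graph.neighborSet w :=
    Set.insert_subset h₁ (Set.pair_subset h₂ h₃)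
  have hdeg : N.deg w = 3 := hN.deg_eq_three_s18 h₁ h₂ h₁₂
  have heq := Set.eq_of_subset_of_ncard_le hsub
    (by rw [← deg, hdeg, Set.ncard_eq_three.mpr ⟨n₁, n₂, n₃, h₁₂, h₁₃, h₂₃, rfl⟩])
    (Set.finite_of_ncard_ne_zero (by rw [← deg, hdeg]; omega))
  have hz' : z ∈ N.graph.neighborSet w := hz
  simpa [← heq] using hz'

lemma IsUBPN.exists_adj_ne_ne (hN : N.IsUBPN X) {t x : V} (hxt : N.graph.Adj t x) (ht : t ∉ X) :
    ∃ s₁ s₂, s₁ ≠ s₂ ∧ s₁ ≠ x ∧ s₂ ≠ x ∧ N.graph.Adj t s₁ ∧ N.graph.Adj t s₂ := by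
  have hdeg : N.deg t = 3 := by
    rcases hN.2.1 t (N.support hxt).1 with h | h
    · exact absurd (hN.2.2 ▸ ⟨(N.support hxt).1, h⟩ : t ∈ X) ht
    · exact h
  have hx : x ∈ N.graph.neighborSet t := hxt
  have := Set.ncard_sdiff_singleton_of_mem hx
  rw [← deg, hdeg, Set.ncard_eq_two] at this
  obtain ⟨s₁, s₂, hne, hs⟩ := this
  have h₁ : s₁ ∈ N.graph.neighborSet t \ {x} := by simp [hs]
  have h₂ : s₂ ∈ N.graph.neighborSet t \ {x} := by simp [hs]
  exact ⟨s₁, s₂, hne, h₁.2, h₂.2, h₁.1, h₂.1⟩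

lemma Simple.exists_eq_mk (hs : N.Simple X) {w : V} (hw : w ∉ X) {e : Sym2 V}
    (he : N.IsCutEdge e) (hwe : w ∈ e) : ∃ x ∈ X, N.graph.Adj w x ∧ e = s(w, x) := by
  obtain ⟨x, hx, hxe⟩ := hs e he
  have hex : e = s(w, x) := (Sym2.mem_and_mem_iff fun h : w = x => hw (h ▸ hx)).mp ⟨hwe, hxe⟩
  exact ⟨x, hx, by rw [← SimpleGraph.mem_edgeSet, ← hex]; exact he.1, hex⟩

end Net

namespace Net.IsEmbedding

variable {V : Type} {U T : Net V} {X : Set V} {fv : V → V}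
  {fe : ∀ ⦃a b : V⦄, T.graph.Adj a b → U.graph.Walk (fv a) (fv b)}

lemma sym2_eq_of_mem_edges (hemb : IsEmbedding T U X fv fe) {a b c d : V}
    (h : T.graph.Adj a b) (h' : T.graph.Adj c d) {f : Sym2 V} (hf : f ∈ (fe h).edges)
    (hf' : f ∈ (fe h').edges) : s(a, b) = s(c, d) :=
  by_contra fun hne => hemb.2.2.2.2 h h' hne f hf hf'

lemma fv_ne_of_adj (hemb : IsEmbedding T U X fv fe) {a b : V} (h : T.graph.Adj a b) :
    fv a ≠ fv b :=
  fun hab => h.ne (hemb.2.2.1 a (T.support h).1 b (T.support h).2 hab)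

lemma mk_mem_edges_of_mem_left (hemb : IsEmbedding T U X fv fe) (hU : U.IsUBPN X)
    {x t c : V} (hx : x ∈ X) (h : T.graph.Adj x t) (hxc : U.graph.Adj x c) :
    s(x, c) ∈ (fe h).edges := by
  have hfx : fv x = x := hemb.2.1 x hx
  simpa using ((fe h).copy hfx rfl).mk_start_mem_edges_of_neighborSet_eq_singleton
    (hfx ▸ hemb.fv_ne_of_adj h) (hU.neighborSet_eq_singleton hx hxc)

lemma mk_mem_edges_of_mem_right (hemb : IsEmbedding T U X fv fe) (hU : U.IsUBPN X)
    {x t c : V} (hx : x ∈ X) (h : T.graph.Adj t x) (hxc : U.graph.Adj x c) :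
    s(x, c) ∈ (fe h).edges := by
  have hfx : fv x = x := hemb.2.1 x hx
  simpa using ((fe h).copy rfl hfx).mk_end_mem_edges_of_neighborSet_eq_singleton
    (hfx ▸ hemb.fv_ne_of_adj h) (hU.neighborSet_eq_singleton hx hxc)

variable {p u v : V} (hu : T.graph.Adj u p) (hv : T.graph.Adj p v)

lemma eq_or_eq_of_mem_edges_append (hemb : IsEmbedding T U X fv fe) {a b : V}
    (h : T.graph.Adj a b) {f : Sym2 V} (hf : f ∈ (fe h).edges)
    (hfP : f ∈ ((fe hu).append (fe hv)).edges) : a = p ∨ b = p := by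
  rw [Walk.edges_append, List.mem_append] at hfP
  rcases hfP with hf' | hf'
  · have := hemb.sym2_eq_of_mem_edges h hu hf hf'
    rw [Sym2.eq_iff] at this
    tauto
  · have := hemb.sym2_eq_of_mem_edges h hv hf hf'
    rw [Sym2.eq_iff] at this
    tauto

lemma eq_of_fv_eq (hemb : IsEmbedding T U X fv fe) (hU : U.IsUBPN X) (hT : T.IsUBPN X)
    {x t c : V} (hx : x ∈ X) (hxt : T.graph.Adj x t) (hxc : U.graph.Adj x c) (hc : c ∉ X)
    (hH : ∀ z, U.graph.Adj c z → z ≠ x → s(c, z) ∈ ((fe hu).append (fe hv)).edges)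
    (hft : fv t = c) : t = p := by
  by_contra htp
  have htX : t ∉ X := fun htX => hc (by rw [← hft, hemb.2.1 t htX]; exact htX)
  obtain ⟨s₁, s₂, hne, hs₁x, hs₂x, h₁, h₂⟩ := hT.exists_adj_ne_ne hxt.symm htX
  -- every other tree edge at `t` leaves `c` along an edge other than `cx`, hence ends at `p`
  have hsp : ∀ s, T.graph.Adj t s → s ≠ x → s = p := by
    intro s hts hsx
    let W := (fe hts).copy hft rfl
    have hnil : ¬W.Nil := Walk.not_nil_of_ne (hft ▸ hemb.fv_ne_of_adj hts)
    have hz : s(c, W.snd) ∈ (fe hts).edges := by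
      simpa [W] using W.mk_start_snd_mem_edges hnil
    have hzx : W.snd ≠ x := fun hzx => by
      rw [hzx, Sym2.eq_swap] at hz
      have := hemb.sym2_eq_of_mem_edges hxt hts (hemb.mk_mem_edges_of_mem_left hU hx hxt hxc) hz
      rcases Sym2.eq_iff.mp this with ⟨h, -⟩ | ⟨h, -⟩
      exacts [hxt.ne h, hsx h.symm]
    have hzP := hH _ ((fe hts).edges_subset_edgeSet hz) hzx
    exact (hemb.eq_or_eq_of_mem_edges_append hu hv hts hz hzP).resolve_left htp
  exact hne ((hsp s₁ h₁ hs₁x).trans (hsp s₂ h₂ hs₂x).symm)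

lemma eq_of_fv_ne (hemb : IsEmbedding T U X fv fe) (hU : U.IsUBPN X) (hpX : p ∉ X)
    {x t c : V} (hx : x ∈ X) (hxt : T.graph.Adj x t) (hxc : U.graph.Adj x c)
    (hH : ∀ z, U.graph.Adj c z → z ≠ x → s(c, z) ∈ ((fe hu).append (fe hv)).edges)
    (hft : fv t ≠ c) : t = p := by
  let W := (fe hxt).copy (hemb.2.1 x hx) rfl
  have hW : W.IsPath := (Walk.isPath_copy _ _ _).mpr (hemb.2.2.2.1 hxt)
  have hcW : c ∈ W.support := W.snd_mem_support_of_mem_edges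
    (by simpa [W] using hemb.mk_mem_edges_of_mem_left hU hx hxt hxc)
  -- `c` is an inner vertex of the image of `xt`, which leaves `c` along an edge other than `cx`
  obtain ⟨n₁, n₂, hne, h₁, h₂⟩ := hW.exists_ne_mem_edges hcW hxc.ne' (Ne.symm hft)
  obtain ⟨n, hn, hnx⟩ : ∃ n, s(c, n) ∈ (fe hxt).edges ∧ n ≠ x := by
    by_cases h : n₁ = x
    exacts [⟨n₂, by simpa [W] using h₂, h ▸ hne.symm⟩, ⟨n₁, by simpa [W] using h₁, h⟩]
  have hnP := hH n ((fe hxt).edges_subset_edgeSet hn) hnx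
  exact (hemb.eq_or_eq_of_mem_edges_append hu hv hxt hn hnP).resolve_left
    fun h => hpX (h ▸ hx)

lemma adj_of_forall_mem_edges_append (hemb : IsEmbedding T U X fv fe) (hU : U.IsUBPN X)
    (hT : T.IsUBPN X) (hpX : p ∉ X) {x c : V} (hx : x ∈ X) (hxc : U.graph.Adj x c)
    (hc : c ∉ X)
    (hH : ∀ z, U.graph.Adj c z → z ≠ x → s(c, z) ∈ ((fe hu).append (fe hv)).edges) :
    T.graph.Adj x p := by
  obtain ⟨t, ht⟩ := Set.ncard_eq_one.mp (hT.deg_eq_one hx)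
  have hxt : T.graph.Adj x t := (ht ▸ rfl : t ∈ T.graph.neighborSet x)
  by_cases hft : fv t = c
  · exact hemb.eq_of_fv_eq hu hv hU hT hx hxt hxc hc hH hft ▸ hxt
  · exact hemb.eq_of_fv_ne hu hv hU hpX hx hxt hxc hH hft ▸ hxt

lemma eq_or_eq_and_mk_mem_edges_append (hemb : IsEmbedding T U X fv fe) (hU : U.IsUBPN X)
    (hT : T.IsUBPN X) (hpX : p ∉ X)
    (hleaf : ∀ x ∈ X, T.graph.Adj p x → x = u ∨ x = v) {x c n₁ n₂ : V} (hx : x ∈ X)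
    (hxc : U.graph.Adj x c) (hn : n₁ ≠ n₂) (h₁ : s(c, n₁) ∈ ((fe hu).append (fe hv)).edges)
    (h₂ : s(c, n₂) ∈ ((fe hu).append (fe hv)).edges) (hx₁ : x ≠ n₁) (hx₂ : x ≠ n₂) :
    (x = u ∨ x = v) ∧ s(x, c) ∈ ((fe hu).append (fe hv)).edges := by
  have hcn₁ : U.graph.Adj c n₁ := Walk.edges_subset_edgeSet _ h₁
  have hcn₂ : U.graph.Adj c n₂ := Walk.edges_subset_edgeSet _ h₂
  have hH : ∀ z, U.graph.Adj c z → z ≠ x → s(c, z) ∈ ((fe hu).append (fe hv)).edges := by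
    intro z hz hzx
    rcases hU.eq_or_eq_or_eq_of_adj hcn₁ hcn₂ hxc.symm hn hx₁.symm hx₂.symm hz with rfl | rfl | rfl
    exacts [h₁, h₂, absurd rfl hzx]
  have hxp := hemb.adj_of_forall_mem_edges_append hu hv hU hT hpX hx hxc
    (hU.notMem_of_adj_of_adj hcn₁ hcn₂ hn) hH
  rw [Walk.edges_append, List.mem_append]
  rcases hleaf x hx hxp.symm with rfl | rfl
  · exact ⟨.inl rfl, .inl (hemb.mk_mem_edges_of_mem_left hU hx hu hxc)⟩
  · exact ⟨.inr rfl, .inr (hemb.mk_mem_edges_of_mem_right hU hx hv hxc)⟩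

lemma neighborSet_eq_singleton_of_isCycle (hemb : IsEmbedding T U X fv fe) (hU : U.IsUBPN X)
    (hT : T.IsUBPN X) (hs : U.Simple X) (hpX : p ∉ X)
    (hleaf : ∀ x ∈ X, T.graph.Adj p x → x = u ∨ x = v) {r c : V} {C : U.graph.Walk r r}
    (hC : C.IsCycle) (hCP : ∀ e ∈ C.edges, e ∈ ((fe hu).append (fe hv)).edges)
    (hc : c ∈ C.support) {e : Sym2 V} (he : U.IsCutEdge e) (hce : c ∈ e) :
    U.graph.neighborSet u = {c} ∨ U.graph.neighborSet v = {c} := by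
  have hCX : ∀ y ∈ C.support, y ∉ X := fun y hy => by
    obtain ⟨m₁, m₂, hm, h₁, h₂⟩ := hC.exists_ne_mem_edges hy
    exact hU.notMem_of_adj_of_adj (C.edges_subset_edgeSet h₁) (C.edges_subset_edgeSet h₂) hm
  obtain ⟨n₁, n₂, hn, h₁, h₂⟩ := hC.exists_ne_mem_edges hc
  obtain ⟨x, hx, hcx, -⟩ := hs.exists_eq_mk (hCX c hc) he hce
  have hxn : ∀ n, s(c, n) ∈ C.edges → x ≠ n :=
    fun n h hxn => hCX n (C.snd_mem_support_of_mem_edges h) (hxn ▸ hx)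
  obtain ⟨hxuv, -⟩ := hemb.eq_or_eq_and_mk_mem_edges_append hu hv hU hT hpX hleaf hx hcx.symm hn
    (hCP _ h₁) (hCP _ h₂) (hxn _ h₁) (hxn _ h₂)
  rcases hxuv with rfl | rfl
  exacts [.inl (hU.neighborSet_eq_singleton hx hcx.symm),
    .inr (hU.neighborSet_eq_singleton hx hcx.symm)]

lemma not_forall_mem_edges_append_of_isCycle (hemb : IsEmbedding T U X fv fe)
    (hU : U.IsUBPN X) (hT : T.IsUBPN X) (hs : U.Simple X) (h3 : U.QCuttable 3) (hpX : p ∉ X)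
    (hleaf : ∀ x ∈ X, T.graph.Adj p x → x = u ∨ x = v) {r : V} {C : U.graph.Walk r r}
    (hC : C.IsCycle) : ¬∀ e ∈ C.edges, e ∈ ((fe hu).append (fe hv)).edges := by
  classical
  intro hCP
  obtain ⟨_, _, W, hW, hlen, hWC, -, hcut⟩ := h3 C hC
  have hnbr : ∀ c ∈ W.support, U.graph.neighborSet u = {c} ∨ U.graph.neighborSet v = {c} := by
    intro c hc
    obtain ⟨e, he, hce⟩ := hcut c hc
    exact hemb.neighborSet_eq_singleton_of_isCycle hu hv hU hT hs hpX hleaf hC hCP (hWC c hc) he hce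
  obtain ⟨c₁, hc₁, c₂, hc₂, c₃, hc₃, h₁₂, h₁₃, h₂₃⟩ := Finset.two_lt_card.mp
    (by rwa [List.toFinset_card_of_nodup hW.support_nodup] : 2 < W.support.toFinset.card)
  rw [List.mem_toFinset] at hc₁ hc₂ hc₃
  rcases hnbr c₁ hc₁ with h₁ | h₁ <;> rcases hnbr c₂ hc₂ with h₂ | h₂ <;>
    rcases hnbr c₃ hc₃ with h₃ | h₃ <;> simp_all

-- Two distinct paths from a common vertex `w ≠ fv p` to `fv p` would close a cycle inside the
-- concatenation.
lemma eq_of_mem_support_of_mem_support (hemb : IsEmbedding T U X fv fe) (hU : U.IsUBPN X)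
    (hT : T.IsUBPN X) (hs : U.Simple X) (h3 : U.QCuttable 3) (hpX : p ∉ X)
    (hleaf : ∀ x ∈ X, T.graph.Adj p x → x = u ∨ x = v) (huv : u ≠ v) {w : V}
    (hwu : w ∈ (fe hu).support) (hwv : w ∈ (fe hv).support) : w = fv p := by
  classical
  by_contra hwp
  set P₁ := (fe hu).dropUntil w hwu
  set P₂ := ((fe hv).takeUntil w hwv).reverse
  have hP₁ : ∀ e ∈ P₁.edges, e ∈ (fe hu).edges := fun e he =>
    (fe hu).edges_dropUntil_subset_edges hwu he
  have hP₂ : ∀ e ∈ P₂.edges, e ∈ (fe hv).edges := fun e he =>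
    (fe hv).edges_takeUntil_subset_edges hwv (by simpa [P₂] using he)
  have hne : P₁ ≠ P₂ := fun h => by
    have he := P₁.mk_start_snd_mem_edges (Walk.not_nil_of_ne hwp)
    have := hemb.sym2_eq_of_mem_edges hu hv (hP₁ _ he) (hP₂ _ (h ▸ he))
    rw [Sym2.eq_iff] at this
    rcases this with ⟨-, h⟩ | ⟨h, -⟩
    exacts [hv.ne h, huv h]
  obtain ⟨r, C, hC, hCP⟩ := Walk.exists_isCycle_of_isPath_ne
    ((hemb.2.2.2.1 hu).dropUntil hwu) ((hemb.2.2.2.1 hv).takeUntil hwv).reverse hne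
  refine hemb.not_forall_mem_edges_append_of_isCycle hu hv hU hT hs h3 hpX hleaf hC fun e he => ?_
  rw [Walk.edges_append, List.mem_append]
  exact (hCP e he).imp (hP₁ e) (hP₂ e)

lemma isPath_append (hemb : IsEmbedding T U X fv fe) (hU : U.IsUBPN X) (hT : T.IsUBPN X)
    (hs : U.Simple X) (h3 : U.QCuttable 3) (hpX : p ∉ X)
    (hleaf : ∀ x ∈ X, T.graph.Adj p x → x = u ∨ x = v) (huv : u ≠ v) :
    ((fe hu).append (fe hv)).IsPath := by
  have hnd := (hemb.2.2.2.1 hv).support_nodup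
  rw [← Walk.cons_tail_support, List.nodup_cons] at hnd
  rw [Walk.isPath_def, Walk.support_append, List.nodup_append]
  refine ⟨(hemb.2.2.2.1 hu).support_nodup, hnd.2, fun a ha b hb hab => hnd.1 ?_⟩
  subst hab
  have hap := hemb.eq_of_mem_support_of_mem_support hu hv hU hT hs h3 hpX hleaf huv ha
    (List.mem_of_mem_tail hb)
  exact hap ▸ hb

lemma entangled_append (hemb : IsEmbedding T U X fv fe) (hU : U.IsUBPN X) (hT : T.IsUBPN X)
    (hs : U.Simple X) (h3 : U.QCuttable 3) (hpX : p ∉ X)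
    (hleaf : ∀ x ∈ X, T.graph.Adj p x → x = u ∨ x = v) (huv : u ≠ v) :
    U.Entangled ((fe hu).append (fe hv)) := by
  intro w hw hwu hwv e he hwe
  obtain ⟨n₁, n₂, hn, h₁, h₂⟩ :=
    (hemb.isPath_append hu hv hU hT hs h3 hpX hleaf huv).exists_ne_mem_edges hw hwu hwv
  obtain ⟨x, hx, hwx, rfl⟩ := hs.exists_eq_mk (hU.notMem_of_adj_of_adj
    (Walk.edges_subset_edgeSet _ h₁) (Walk.edges_subset_edgeSet _ h₂) hn) he hwe
  by_contra hxP
  have hxn : ∀ n, s(w, n) ∈ ((fe hu).append (fe hv)).edges → x ≠ n :=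
    fun n h hxn => hxP (hxn ▸ h)
  rw [Sym2.eq_swap] at hxP
  exact hxP (hemb.eq_or_eq_and_mk_mem_edges_append hu hv hU hT hpX hleaf hx hwx.symm hn h₁ h₂
    (hxn _ h₁) (hxn _ h₂)).2

end Net.IsEmbedding

theorem concat_entangled_general {V : Type}
    (U T : Net V) (X : Set V) (hU : U.IsUBPN X) (hs : U.Simple X) (h3 : U.QCuttable 3)
    (hT : T.IsTree X)
    (fv : V → V) (fe : ∀ ⦃a b : V⦄, T.graph.Adj a b → U.graph.Walk (fv a) (fv b))
    (hemb : IsEmbedding T U X fv fe)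
    (p q u v : V) (hpX : p ∉ X)
    (hq : T.graph.Adj p q) (hu : T.graph.Adj u p) (hv : T.graph.Adj p v)
    (hqu : q ≠ u) (hqv : q ≠ v) (huv : u ≠ v)
    (hqX : q ∉ X) :
    ((fe hu).append (fe hv)).IsPath ∧ U.Entangled ((fe hu).append (fe hv)) := by
  have hleaf : ∀ x ∈ X, T.graph.Adj p x → x = u ∨ x = v := fun x hx hpx => by
    rcases hT.1.eq_or_eq_or_eq_of_adj hq hu.symm hv hqu hqv huv hpx with rfl | h | h
    exacts [absurd hx hqX, .inl h, .inr h]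
  exact ⟨hemb.isPath_append hu hv hU hT.1 hs h3 hpX hleaf huv,
    hemb.entangled_append hu hv hU hT.1 hs h3 hpX hleaf huv⟩

/-- Let `U` be a simple `3`-cuttable unrooted binary phylogenetic
network on `X`, let `T` be an unrooted binary phylogenetic `X`-tree displayed by `U`, and
let `(fv, fe)` be an embedding of `T` in `U`.  Let `p` be an internal vertex of `T` with
neighbors `q`, `u`, and `v`.  If `q` is not a leaf, then the concatenation of the paths
assigned to `{u, p}` and `{p, v}` is an entangled path between `fv u` and `fv v`. -/
theorem concat_entangled {V : Type} [Fintype V]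
    (U T : Net V) (X : Set V) (hU : U.IsUBPN X) (hs : U.Simple X) (h3 : U.QCuttable 3)
    (hT : T.IsTree X) (hd : U.Displays T X)
    (fv : V → V) (fe : ∀ ⦃a b : V⦄, T.graph.Adj a b → U.graph.Walk (fv a) (fv b))
    (hemb : IsEmbedding T U X fv fe)
    (p q u v : V) (hp : p ∈ T.verts) (hpX : p ∉ X)
    (hq : T.graph.Adj p q) (hu : T.graph.Adj u p) (hv : T.graph.Adj p v)
    (hqu : q ≠ u) (hqv : q ≠ v) (huv : u ≠ v)
    (hqX : q ∉ X) :
    ((fe hu).append (fe hv)).IsPath ∧ U.Entangled ((fe hu).append (fe hv)) :=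
  concat_entangled_general U T X hU hs h3 hT fv fe hemb p q u v hpX hq hu hv hqu hqv huv hqX
end

section
/- Let T be an unrooted binary phylogenetic X-tree with |X| ≥ 4. Then T has either a pendant subtree on three leaves x, y, z such that {x,y} is a cherry of T, or a pendant subtree on four leaves w, x, y, z such that {x,y} and {w,z} are cherries of T. -/
namespace Net

variable {V : Type}

/-- The set `S` is the leaf set of a pendant subtree of the tree `T` with labels `X`:
there is an edge `{a, b}` of `T` whose deletion detaches a subtree (on the `a`-side)
whose leaves are exactly the elements of `S`. -/
def PendantOn (T : Net V) (X S : Set V) : Prop :=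
  ∃ a b, T.graph.Adj a b ∧
    ∀ x ∈ X, (x ∈ S ↔ (T.graph.deleteEdges {s(a, b)}).Reachable a x)

/-- `{x, y}` is a cherry of the tree `T`: distinct leaves adjacent to a common vertex. -/
def IsCherryOf (T : Net V) (x y : V) : Prop :=
  x ≠ y ∧ ∃ p, T.graph.Adj x p ∧ T.graph.Adj y p

end Net

open Net

/-!
Take a longest path `v₀ v₁ v₂ v₃ …` in `T`; since `|X| ≥ 4` it has at least three edges.
A neighbour of an end vertex off the path would extend it (there are no cycles), so by
maximality `v₀` and the third neighbour `y` of `v₁` are leaves: `{v₀, y}` is a cherry. Let `c` be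
the third neighbour of `v₂`. If `c` is a leaf, cutting `v₂v₃` detaches a pendant subtree on
`{v₀, y, c}`. Otherwise the two other neighbours `w, z` of `c` are leaves, again by maximality
(`w c v₂ v₃ …` is as long as the path), and cutting `v₂v₃` detaches the subtree on
`{w, v₀, y, z}`, with cherries `{v₀, y}` and `{w, z}`.
-/

namespace Set

variable {α : Type} {s : Set α} {a b : α}

theorem exists_eq_triple_of_ncard_eq_three_of_mem (hs : s.ncard = 3) (ha : a ∈ s) :
    ∃ b c, a ≠ b ∧ a ≠ c ∧ b ≠ c ∧ s = {a, b, c} := by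
  obtain ⟨b, c, hbc, hdiff⟩ :=
    ncard_eq_two.mp (by rw [ncard_sdiff_singleton_of_mem ha, hs] : (s \ {a}).ncard = 2)
  have hb : b ∈ s \ {a} := hdiff ▸ by simp
  have hc : c ∈ s \ {a} := hdiff ▸ by simp
  refine ⟨b, c, fun h => hb.2 h.symm, fun h => hc.2 h.symm, hbc, ?_⟩
  rw [← hdiff, insert_sdiff_self_of_mem ha]

theorem exists_eq_triple_of_ncard_eq_three_of_mem_of_mem (hs : s.ncard = 3) (ha : a ∈ s)
    (hb : b ∈ s) (hab : a ≠ b) : ∃ c, a ≠ c ∧ b ≠ c ∧ s = {a, b, c} := by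
  obtain ⟨b', c', hab', hac', hbc', rfl⟩ := exists_eq_triple_of_ncard_eq_three_of_mem hs ha
  rcases hb with rfl | rfl | rfl
  · exact absurd rfl hab
  · exact ⟨c', hac', hbc', rfl⟩
  · exact ⟨b', hab', hbc'.symm, by rw [pair_comm]⟩

theorem ncard_le_three_of_subset {c : α} (h : s ⊆ {a, b, c}) : s.ncard ≤ 3 :=
  (ncard_le_ncard h).trans <| (ncard_insert_le _ _).trans <| Nat.succ_le_succ <|
    (ncard_insert_le _ _).trans (by simp)

end Set

namespace SimpleGraph

variable {V : Type} {G : SimpleGraph V}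

theorem Reachable.mem_of_forall_adj_mem {A : Set V} (hA : ∀ p ∈ A, ∀ q, G.Adj p q → q ∈ A)
    {u v : V} (h : G.Reachable u v) (hu : u ∈ A) : v ∈ A := by
  obtain ⟨W⟩ := h
  induction W with
  | nil => exact hu
  | cons h _ ih => exact ih (hA _ hu _ h)

theorem adj_deleteEdges_of_ne {a b p q : V} (h : G.Adj p q) (ha : p ≠ a) (hb : p ≠ b) :
    (G.deleteEdges {s(a, b)}).Adj p q := by
  simp [h, ha, hb]

theorem ne_of_neighborSet_eq_singleton {x y a b : V} (hx : G.neighborSet x = {a})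
    (hy : G.neighborSet y = {b}) (hab : a ≠ b) : x ≠ y := by
  rintro rfl
  exact hab (Set.singleton_injective (hx.symm.trans hy))

theorem IsAcyclic.isPath_cons (hG : G.IsAcyclic) {x u t : V} {P : G.Walk u t} (hP : P.IsPath)
    (hx : G.Adj x u) (hxs : x ≠ P.snd) : (Walk.cons hx P).IsPath :=
  (Walk.cons_isPath_iff _ _).2 ⟨hP, fun hmem => hxs (hG.eq_snd_of_adj_start hP hx.symm hmem)⟩

namespace Walk

def IsLongestPath {u v : V} (P : G.Walk u v) : Prop :=
  P.IsPath ∧ ∀ ⦃a b : V⦄ (Q : G.Walk a b), Q.IsPath → Q.length ≤ P.length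

variable {u v : V} {P : G.Walk u v}

theorem IsLongestPath.of_length_eq (hP : P.IsLongestPath) {a b : V} {Q : G.Walk a b}
    (hQ : Q.IsPath) (hlen : Q.length = P.length) : Q.IsLongestPath :=
  ⟨hQ, hlen ▸ hP.2⟩

theorem IsLongestPath.reverse (hP : P.IsLongestPath) : P.reverse.IsLongestPath :=
  hP.of_length_eq hP.1.reverse P.length_reverse

theorem IsLongestPath.neighborSet_eq (hG : G.IsAcyclic) (hP : P.IsLongestPath) (hne : ¬ P.Nil) :
    G.neighborSet u = {P.snd} := by
  ext x
  refine ⟨fun hx => ?_, fun hx => hx ▸ P.adj_snd hne⟩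
  by_contra hxs
  have := hP.2 _ (hG.isPath_cons hP.1 (G.adj_symm hx) hxs)
  simp at this

theorem IsLongestPath.neighborSet_eq_of_adj_snd (hG : G.IsAcyclic) {u b t x : V} {h : G.Adj u b}
    {Q : G.Walk b t} (hP : (cons h Q).IsLongestPath) (hx : G.Adj x b) (hxs : x ≠ Q.snd) :
    G.neighborSet x = {b} := by
  simpa using (hP.of_length_eq (hG.isPath_cons hP.1.of_cons hx hxs) (by simp)).neighborSet_eq hG
    not_nil_cons

theorem IsLongestPath.neighborSet_eq_of_adj_of_adj (hG : G.IsAcyclic) {u b m t c x : V}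
    {h : G.Adj u b} {h' : G.Adj b m} {Q : G.Walk m t} (hP : (cons h (cons h' Q)).IsLongestPath)
    (hc : G.Adj c m) (hcs : c ≠ Q.snd) (hx : G.Adj x c) (hxm : x ≠ m) :
    G.neighborSet x = {c} := by
  have hQ : (cons hx (cons hc Q)).IsPath :=
    hG.isPath_cons (hG.isPath_cons hP.1.of_cons.of_cons hc hcs) hx (by simpa using hxm)
  simpa using (hP.of_length_eq hQ (by simp)).neighborSet_eq hG not_nil_cons

end Walk

theorem exists_isLongestPath [Fintype V] [Nonempty V] (G : SimpleGraph V) :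
    ∃ (a b : V) (P : G.Walk a b), P.IsLongestPath := by
  set L := {n | ∃ (a b : V) (P : G.Walk a b), P.IsPath ∧ P.length = n}
  have hL : BddAbove L := ⟨Fintype.card V, by rintro _ ⟨a, b, P, hP, rfl⟩; exact hP.length_lt.le⟩
  obtain ⟨a, b, P, hP, hlen⟩ : sSup L ∈ L :=
    Nat.sSup_mem ⟨0, Classical.arbitrary V, _, .nil, .nil, rfl⟩ hL
  exact ⟨a, b, P, hP, fun c d Q hQ => hlen ▸ le_csSup hL ⟨c, d, Q, hQ, rfl⟩⟩

end SimpleGraph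

namespace Net

open SimpleGraph

variable {V : Type} {T : Net V} {X : Set V}

theorem IsTree.exists_neighborSet_eq_of_mem (hT : T.IsTree X) {v : V} (hv : v ∈ X) :
    ∃ a, T.graph.neighborSet v = {a} := by
  rw [← hT.1.2.2] at hv
  exact Set.ncard_eq_one.mp hv.2

theorem IsTree.neighborSet_eq_of_mem (hT : T.IsTree X) {v a : V} (hv : v ∈ X)
    (ha : T.graph.Adj v a) : T.graph.neighborSet v = {a} := by
  obtain ⟨b, hb⟩ := hT.exists_neighborSet_eq_of_mem hv
  have hab : a ∈ ({b} : Set V) := hb ▸ ha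
  rwa [← Set.mem_singleton_iff.mp hab] at hb

theorem IsTree.mem_of_neighborSet_eq (hT : T.IsTree X) {v a : V}
    (h : T.graph.neighborSet v = {a}) : v ∈ X := by
  have ha : T.graph.Adj v a := (h ▸ rfl : a ∈ T.graph.neighborSet v)
  rw [← hT.1.2.2]
  exact ⟨(T.support ha).1, by simp [deg, h]⟩

theorem IsTree.notMem_of_neighborSet_eq (hT : T.IsTree X) {v a b c : V}
    (h : T.graph.neighborSet v = {a, b, c}) (hab : a ≠ b) : v ∉ X := by
  intro hv
  obtain ⟨d, hd⟩ := hT.exists_neighborSet_eq_of_mem hv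
  rw [h] at hd
  have ha : a ∈ ({d} : Set V) := hd ▸ by simp
  have hb : b ∈ ({d} : Set V) := hd ▸ by simp
  exact hab (ha.trans hb.symm)

theorem IsTree.deg_eq_three_of_notMem (hT : T.IsTree X) {v a : V} (hv : v ∉ X)
    (ha : T.graph.Adj v a) : T.deg v = 3 :=
  (hT.1.2.1 v (T.support ha).1).resolve_left fun h1 => hv (hT.1.2.2 ▸ ⟨(T.support ha).1, h1⟩)

theorem IsTree.exists_neighborSet_eq_of_notMem (hT : T.IsTree X) {v a : V} (hv : v ∉ X)
    (ha : T.graph.Adj v a) :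
    ∃ b c, a ≠ b ∧ a ≠ c ∧ b ≠ c ∧ T.graph.neighborSet v = {a, b, c} :=
  Set.exists_eq_triple_of_ncard_eq_three_of_mem (hT.deg_eq_three_of_notMem hv ha) ha

theorem IsTree.exists_neighborSet_eq_of_adj_of_adj (hT : T.IsTree X) {v a b : V}
    (ha : T.graph.Adj v a) (hb : T.graph.Adj v b) (hab : a ≠ b) :
    ∃ c, a ≠ c ∧ b ≠ c ∧ T.graph.neighborSet v = {a, b, c} := by
  have hv : v ∉ X := fun hv => hab <| by
    have h := hT.neighborSet_eq_of_mem hv ha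
    exact (h ▸ hb : b ∈ ({a} : Set V)).symm
  exact Set.exists_eq_triple_of_ncard_eq_three_of_mem_of_mem (hT.deg_eq_three_of_notMem hv ha)
    ha hb hab

theorem IsTree.subset_of_neighborSet_subset (hT : T.IsTree X) {A : Set V}
    (hA : ∀ p ∈ A, T.graph.neighborSet p ⊆ A) {v : V} (hv : v ∈ A) (hvT : v ∈ T.verts) :
    X ⊆ A := by
  intro x hx
  rw [← hT.1.2.2] at hx
  exact (hT.1.1.2 v hvT x hx.1).mem_of_forall_adj_mem (fun p hp _ hq => hA p hp hq) hv

theorem IsTree.exists_cherry_of_isLongestPath (hT : T.IsTree X) {v₀ v₁ v₂ t : V}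
    {h₀₁ : T.graph.Adj v₀ v₁} {h₁₂ : T.graph.Adj v₁ v₂} {P : T.graph.Walk v₂ t}
    (hP : (Walk.cons h₀₁ (Walk.cons h₁₂ P)).IsLongestPath) :
    ∃ y, v₀ ≠ v₂ ∧ v₀ ≠ y ∧ T.graph.neighborSet v₁ = {v₀, v₂, y} ∧
      T.graph.neighborSet v₀ = {v₁} ∧ T.graph.neighborSet y = {v₁} := by
  have h₀₂ : v₀ ≠ v₂ := fun h => ((Walk.cons_isPath_iff _ _).1 hP.1).2 (by simp [h])
  obtain ⟨y, h₀y, h₂y, h₁⟩ := hT.exists_neighborSet_eq_of_adj_of_adj h₀₁.symm h₁₂ h₀₂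
  have hy : T.graph.Adj y v₁ := T.graph.adj_symm (h₁ ▸ by simp : y ∈ T.graph.neighborSet v₁)
  exact ⟨y, h₀₂, h₀y, h₁, by simpa using hP.neighborSet_eq hT.2 Walk.not_nil_cons,
    hP.neighborSet_eq_of_adj_snd hT.2 hy (by simpa using h₂y.symm)⟩

-- A longest path with at most two edges spans the whole tree, which then has at most three leaves.
theorem IsTree.three_le_length_of_isLongestPath (hT : T.IsTree X) (hX : 4 ≤ X.ncard) {u v : V}
    {P : T.graph.Walk u v} (hP : P.IsLongestPath) : 3 ≤ P.length := by
  rcases P with _ | @⟨_, m, _, h₀₁, _ | ⟨h₁₂, _ | ⟨h₂₃, P⟩⟩⟩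
  · obtain ⟨x, hx⟩ := Set.nonempty_of_ncard_ne_zero (by omega : X.ncard ≠ 0)
    obtain ⟨a, ha⟩ := hT.exists_neighborSet_eq_of_mem hx
    have hxa : T.graph.Adj x a := (ha ▸ rfl : a ∈ T.graph.neighborSet x)
    simpa using hP.2 _ (Walk.IsPath.of_adj hxa)
  · have h₀ := hP.neighborSet_eq hT.2 Walk.not_nil_cons
    have h₁ := hP.reverse.neighborSet_eq hT.2 (by simp)
    simp only [Walk.snd_cons, Walk.reverse_cons, Walk.reverse_nil, Walk.nil_append] at h₀ h₁
    have hsub : X ⊆ {u, v} := hT.subset_of_neighborSet_subset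
      (by rintro p (rfl | rfl) <;> simp [h₀, h₁]) (by simp) (T.support h₀₁).1
    have := (Set.ncard_le_ncard hsub).trans (Set.ncard_insert_le u {v})
    rw [Set.ncard_singleton] at this
    omega
  · obtain ⟨y, h₀₂, -, h₁, h₀, hy⟩ := hT.exists_cherry_of_isLongestPath hP
    have h₂ := hP.reverse.neighborSet_eq hT.2 (by simp)
    simp only [Walk.reverse_cons, Walk.reverse_nil, Walk.nil_append, Walk.cons_append,
      Walk.snd_cons] at h₂
    have hsub : X ⊆ {m, u, v, y} := hT.subset_of_neighborSet_subset
      (by rintro p (rfl | rfl | rfl | rfl) <;> simp [h₀, h₁, h₂, hy])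
      (by simp) (T.support h₀₁).2
    have h₁X := hT.notMem_of_neighborSet_eq h₁ h₀₂
    have := Set.ncard_le_three_of_subset fun x hx =>
      (hsub hx).resolve_left (by rintro rfl; exact h₁X hx)
    omega
  · simp

theorem pendantOn_of_neighborSet_subset {S A : Set V} {a b : V} (hab : T.graph.Adj a b)
    (ha : a ∈ A) (hNa : T.graph.neighborSet a ⊆ insert b A)
    (hN : ∀ p ∈ A, p ≠ a → T.graph.neighborSet p ⊆ A) (hAX : A ∩ X ⊆ S)
    (hS : ∀ x ∈ S, (T.graph.deleteEdges {s(a, b)}).Reachable a x) : T.PendantOn X S := by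
  refine ⟨a, b, hab, fun x hx => ⟨hS x, fun hr => hAX ⟨hr.mem_of_forall_adj_mem ?_ ha, hx⟩⟩⟩
  intro p hp q hpq
  rw [deleteEdges_adj] at hpq
  by_cases hpa : p = a
  · subst hpa
    exact (hNa hpq.1).resolve_left fun hqb => hpq.2 (hqb ▸ rfl)
  · exact hN p hp hpa hpq.1

-- The cherry `{v₀, y}` at `v₁` and the branch `B` at `c` both hang from `v₂`, so cutting `v₂v₃`
-- detaches them together.
theorem IsTree.pendantOn_insert_insert_of_cherry (hT : T.IsTree X) {v₀ v₁ v₂ v₃ y c : V}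
    {B S : Set V} (h₀ : T.graph.neighborSet v₀ = {v₁}) (hy : T.graph.neighborSet y = {v₁})
    (h₁ : T.graph.neighborSet v₁ = {v₀, v₂, y}) (h₀₂ : v₀ ≠ v₂)
    (h₂ : T.graph.neighborSet v₂ = {v₁, v₃, c}) (h₁₃ : v₁ ≠ v₃) (hcB : c ∈ B)
    (hB : ∀ p ∈ B, T.graph.neighborSet p ⊆ insert v₂ B) (hBX : B ∩ X ⊆ S)
    (hS : ∀ x ∈ S, (T.graph.deleteEdges {s(v₂, v₃)}).Reachable v₂ x) :
    T.PendantOn X (insert v₀ (insert y S)) := by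
  have a₁₂ : T.graph.Adj v₁ v₂ := by simp [← mem_neighborSet, h₁]
  have r₂₁ := (adj_deleteEdges_of_ne a₁₂ a₁₂.ne h₁₃).symm
  have r₁ : ∀ x, T.graph.Adj v₁ x → (T.graph.deleteEdges {s(v₂, v₃)}).Reachable v₂ x :=
    fun x hx => r₂₁.reachable.trans (adj_deleteEdges_of_ne hx a₁₂.ne h₁₃).reachable
  have a₂₃ : T.graph.Adj v₂ v₃ := by simp [← mem_neighborSet, h₂]
  refine pendantOn_of_neighborSet_subset (A := insert v₂ (insert v₁ (insert v₀ (insert y B))))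
    a₂₃ (by simp) (by simp [h₂, hcB, Set.insert_subset_iff]) ?_ ?_ ?_
  · rintro p (rfl | rfl | rfl | rfl | hpB) hp
    · exact absurd rfl hp
    · simp [h₁, Set.insert_subset_iff]
    · simp [h₀]
    · simp [hy]
    · exact (hB p hpB).trans (Set.insert_subset_insert fun x hx => by simp [hx])
  · rintro x ⟨rfl | rfl | rfl | rfl | hxB, hxX⟩
    · exact absurd hxX (hT.notMem_of_neighborSet_eq h₂ h₁₃)
    · exact absurd hxX (hT.notMem_of_neighborSet_eq h₁ h₀₂)
    · exact Set.mem_insert _ _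
    · exact Set.mem_insert_of_mem _ (Set.mem_insert _ _)
    · exact Set.mem_insert_of_mem _ (Set.mem_insert_of_mem _ (hBX ⟨hxB, hxX⟩))
  · rintro x (rfl | rfl | hxS)
    · exact r₁ x (by simp [← mem_neighborSet, h₁])
    · exact r₁ x (by simp [← mem_neighborSet, h₁])
    · exact hS x hxS

theorem IsTree.exists_pendantOn_three (hT : T.IsTree X) {v₀ v₁ v₂ v₃ y c : V}
    (h₀ : T.graph.neighborSet v₀ = {v₁}) (hy : T.graph.neighborSet y = {v₁})
    (h₁ : T.graph.neighborSet v₁ = {v₀, v₂, y}) (h₀₂ : v₀ ≠ v₂) (h₀y : v₀ ≠ y)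
    (h₂ : T.graph.neighborSet v₂ = {v₁, v₃, c}) (h₁₃ : v₁ ≠ v₃) (h₃c : v₃ ≠ c)
    (hc : T.graph.neighborSet c = {v₂}) :
    ∃ x y z : V, x ∈ X ∧ y ∈ X ∧ z ∈ X ∧ x ≠ y ∧ x ≠ z ∧ y ≠ z ∧
      T.PendantOn X {x, y, z} ∧ T.IsCherryOf x y := by
  have a₁₂ : T.graph.Adj v₁ v₂ := by simp [← mem_neighborSet, h₁]
  have ac₂ : T.graph.Adj c v₂ := by simp [← mem_neighborSet, hc]
  refine ⟨v₀, y, c, hT.mem_of_neighborSet_eq h₀, hT.mem_of_neighborSet_eq hy,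
    hT.mem_of_neighborSet_eq hc, h₀y, ne_of_neighborSet_eq_singleton h₀ hc a₁₂.ne,
    ne_of_neighborSet_eq_singleton hy hc a₁₂.ne,
    hT.pendantOn_insert_insert_of_cherry h₀ hy h₁ h₀₂ h₂ h₁₃ (Set.mem_singleton c) (by simp [hc])
      Set.inter_subset_left ?_,
    h₀y, v₁, by simp [← mem_neighborSet, h₀], by simp [← mem_neighborSet, hy]⟩
  rintro x rfl
  exact (adj_deleteEdges_of_ne ac₂ ac₂.ne h₃c.symm).symm.reachable

theorem IsTree.exists_pendantOn_four (hT : T.IsTree X) {v₀ v₁ v₂ v₃ y c w z : V}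
    (h₀ : T.graph.neighborSet v₀ = {v₁}) (hy : T.graph.neighborSet y = {v₁})
    (h₁ : T.graph.neighborSet v₁ = {v₀, v₂, y}) (h₀₂ : v₀ ≠ v₂) (h₀y : v₀ ≠ y)
    (h₂ : T.graph.neighborSet v₂ = {v₁, v₃, c}) (h₁₃ : v₁ ≠ v₃) (h₁c : v₁ ≠ c) (h₃c : v₃ ≠ c)
    (hc : T.graph.neighborSet c = {v₂, w, z}) (h₂w : v₂ ≠ w) (hwz : w ≠ z)
    (hw : T.graph.neighborSet w = {c}) (hz : T.graph.neighborSet z = {c}) :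
    ∃ w x y z : V, w ∈ X ∧ x ∈ X ∧ y ∈ X ∧ z ∈ X ∧
      w ≠ x ∧ w ≠ y ∧ w ≠ z ∧ x ≠ y ∧ x ≠ z ∧ y ≠ z ∧
      T.PendantOn X {w, x, y, z} ∧ T.IsCherryOf x y ∧ T.IsCherryOf w z := by
  have ac₂ : T.graph.Adj c v₂ := by simp [← mem_neighborSet, hc]
  have r₂c := (adj_deleteEdges_of_ne ac₂ ac₂.ne h₃c.symm).symm
  have hpendant : T.PendantOn X {v₀, y, w, z} := by
    refine hT.pendantOn_insert_insert_of_cherry h₀ hy h₁ h₀₂ h₂ h₁₃ (B := {c, w, z})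
      (Set.mem_insert c _) ?_ ?_ ?_
    · rintro p (rfl | rfl | rfl) <;> simp [hc, hw, hz, Set.insert_subset_iff]
    · rintro x ⟨rfl | hx, hxX⟩
      · exact absurd hxX (hT.notMem_of_neighborSet_eq hc h₂w)
      · exact hx
    · rintro x hx
      have acx : T.graph.Adj c x := by rcases hx with rfl | rfl <;> simp [← mem_neighborSet, hc]
      exact r₂c.reachable.trans (adj_deleteEdges_of_ne acx ac₂.ne h₃c.symm).reachable
  refine ⟨w, v₀, y, z, hT.mem_of_neighborSet_eq hw, hT.mem_of_neighborSet_eq h₀,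
    hT.mem_of_neighborSet_eq hy, hT.mem_of_neighborSet_eq hz,
    ne_of_neighborSet_eq_singleton hw h₀ h₁c.symm, ne_of_neighborSet_eq_singleton hw hy h₁c.symm,
    hwz, h₀y, ne_of_neighborSet_eq_singleton h₀ hz h₁c, ne_of_neighborSet_eq_singleton hy hz h₁c,
    ?_, ⟨h₀y, v₁, by simp [← mem_neighborSet, h₀], by simp [← mem_neighborSet, hy]⟩,
    ⟨hwz, c, by simp [← mem_neighborSet, hw], by simp [← mem_neighborSet, hz]⟩⟩
  rwa [Set.insert_comm w, Set.insert_comm w]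

end Net

/-- Every unrooted binary phylogenetic `X`-tree with `|X| ≥ 4` has
either a pendant subtree on three leaves `x, y, z` such that `{x, y}` is a cherry, or a
pendant subtree on four leaves `w, x, y, z` such that `{x, y}` and `{w, z}` are
cherries. -/
theorem pendant_subtree_guarantee {V : Type} [Fintype V]
    (T : Net V) (X : Set V) (hT : T.IsTree X) (hX : 4 ≤ X.ncard) :
    (∃ x y z : V, x ∈ X ∧ y ∈ X ∧ z ∈ X ∧ x ≠ y ∧ x ≠ z ∧ y ≠ z ∧
      T.PendantOn X {x, y, z} ∧ T.IsCherryOf x y) ∨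
    (∃ w x y z : V, w ∈ X ∧ x ∈ X ∧ y ∈ X ∧ z ∈ X ∧
      w ≠ x ∧ w ≠ y ∧ w ≠ z ∧ x ≠ y ∧ x ≠ z ∧ y ≠ z ∧
      T.PendantOn X {w, x, y, z} ∧ T.IsCherryOf x y ∧ T.IsCherryOf w z) := by
  obtain ⟨x, -⟩ := Set.nonempty_of_ncard_ne_zero (by omega : X.ncard ≠ 0)
  have : Nonempty V := ⟨x⟩
  obtain ⟨_, _, P, hP⟩ := T.graph.exists_isLongestPath
  have hlen := hT.three_le_length_of_isLongestPath hX hP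
  rcases P with _ | @⟨_, v₁, _, h₀₁, _ | @⟨_, v₂, _, h₁₂, _ | @⟨_, v₃, _, h₂₃, P⟩⟩⟩
  · simp at hlen
  · simp at hlen
  · simp at hlen
  obtain ⟨y, h₀₂, h₀y, h₁, h₀, hy⟩ := hT.exists_cherry_of_isLongestPath hP
  have h₁₃ : v₁ ≠ v₃ := fun h =>
    ((SimpleGraph.Walk.cons_isPath_iff _ _).1 hP.1.of_cons).2 (by simp [h])
  obtain ⟨c, h₁c, h₃c, h₂⟩ := hT.exists_neighborSet_eq_of_adj_of_adj h₁₂.symm h₂₃ h₁₃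
  have h₂c : T.graph.Adj v₂ c := by simp [← SimpleGraph.mem_neighborSet, h₂]
  by_cases hcX : c ∈ X
  · exact .inl <| hT.exists_pendantOn_three h₀ hy h₁ h₀₂ h₀y h₂ h₁₃ h₃c
      (hT.neighborSet_eq_of_mem hcX h₂c.symm)
  · obtain ⟨w, z, h₂w, h₂z, hwz, hc⟩ := hT.exists_neighborSet_eq_of_notMem hcX h₂c.symm
    have hleaf : ∀ x, T.graph.Adj c x → x ≠ v₂ → T.graph.neighborSet x = {c} := fun x hx hx₂ =>
      hP.neighborSet_eq_of_adj_of_adj hT.2 h₂c.symm (by simpa using h₃c.symm) hx.symm hx₂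
    exact .inr <| hT.exists_pendantOn_four h₀ hy h₁ h₀₂ h₀y h₂ h₁₃ h₁c h₃c hc h₂w hwz
      (hleaf w (by simp [← SimpleGraph.mem_neighborSet, hc]) h₂w.symm)
      (hleaf z (by simp [← SimpleGraph.mem_neighborSet, hc]) h₂z.symm)
end
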